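/- arXiv:0810.2446 — 8 statements merged into one kernel-verified Lean document; each statement's English description precedes it below -/
import Mathlib

section
/- Let A⁺, A⁻ ∈ ℂ^{m×m} be matrices such that every eigenvalue λ of A⁺ satisfies Re λ > 0 and every eigenvalue μ of A⁻ satisfies Re μ < 0, and let B ∈ ℂ^{m×m}. Then the function t ↦ exp(−tA⁺) B exp(tA⁻) is integrable on [0,∞), and the matrix X = ∫₀^∞ exp(−tA⁺) B exp(tA⁻) dt solves the Sylvester equation A⁺X − XA⁻ = B. -/
/-!
If every eigenvalue of `A` has real part `< -ε`, then `exp (t • A) = O(e^{-εt})` as `t → ∞`: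
on the generalized eigenspace of `μ` the exponential series terminates after the nilpotent part,
so `exp (t • A) v = e^{tμ} ∑_{j<k} t^j/j! (A - μ)^j v`, and these eigenspaces span `ℂⁿ`.
Hence `F t = exp (-t A⁺) B exp (t A⁻)` decays exponentially, so it is integrable and tends to `0`.
Since `F' = -(A⁺ F - F A⁻)`, integrating over `[0, ∞)` gives `A⁺ X - X A⁻ = F 0 - lim F = B`.
-/

open NormedSpace MeasureTheory

attribute [local instance] Matrix.linftyOpNormedRing Matrix.linftyOpNormedAlgebra
  Matrix.linftyOpNormedSpace

open Filter Topology Set Asymptotics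
open scoped Matrix Nat

namespace Matrix

variable {n : Type*} [Fintype n] [DecidableEq n]

theorem exp_smul_mulVec_of_pow_sub_smul_mulVec_eq_zero (A : Matrix n n ℂ) (μ z : ℂ) {k : ℕ}
    {v : n → ℂ} (hv : (A - μ • 1) ^ k *ᵥ v = 0) :
    exp (z • A) *ᵥ v =
      Complex.exp (z * μ) • ∑ j ∈ Finset.range k, (z ^ j / j !) • ((A - μ • 1) ^ j *ᵥ v) := by
  set N := A - μ • 1
  have hscalar :
      exp (algebraMap ℂ (Matrix n n ℂ) (z * μ)) = algebraMap ℂ _ (Complex.exp (z * μ)) := by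
    rw [Complex.exp_eq_exp_ℂ]; exact (algebraMap_exp_comm _).symm
  have hsplit : exp (z • A) = Complex.exp (z * μ) • exp (z • N) := by
    rw [show z • A = algebraMap ℂ _ (z * μ) + z • N by
        simp only [N, Algebra.algebraMap_eq_smul_one]; module,
      exp_add_of_commute _ _ (Algebra.commute_algebraMap_left _ _), hscalar,
      ← Algebra.smul_def]
  have hseries : HasSum (fun j => ((j ! : ℂ)⁻¹ • (z • N) ^ j) *ᵥ v) (exp (z • N) *ᵥ v) :=
    (exp_series_hasSum_exp' (𝕂 := ℂ) (z • N)).map (mulVec.addMonoidHomLeft v)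
      (continuous_id.matrix_mulVec continuous_const)
  have htrunc : HasSum (fun j => ((j ! : ℂ)⁻¹ • (z • N) ^ j) *ᵥ v)
      (∑ j ∈ Finset.range k, (z ^ j / j !) • (N ^ j *ᵥ v)) := by
    have hterm : ∀ j, ((j ! : ℂ)⁻¹ • (z • N) ^ j) *ᵥ v = (z ^ j / j !) • (N ^ j *ᵥ v) := by
      intro j
      rw [smul_pow, smul_smul, smul_mulVec, inv_mul_eq_div]
    simp only [hterm]
    refine hasSum_sum_of_ne_finset_zero fun j hj => ?_
    rw [Finset.mem_range, not_lt] at hj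
    have hNj : N ^ j *ᵥ v = 0 := by
      rw [← Nat.sub_add_cancel hj, pow_add, ← mulVec_mulVec, hv, mulVec_zero]
    rw [hNj, smul_zero]
  rw [hsplit, smul_mulVec, hseries.unique htrunc]

theorem isBigO_exp_smul_mulVec_of_pow_sub_smul_mulVec_eq_zero (A : Matrix n n ℂ) {μ : ℂ} {ε : ℝ}
    (hμ : μ.re < -ε) {k : ℕ} {v : n → ℂ} (hv : (A - μ • 1) ^ k *ᵥ v = 0) :
    (fun t : ℝ => exp (t • A) *ᵥ v) =O[atTop] fun t => Real.exp (-ε * t) := by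
  have hδ : 0 < -ε - μ.re := by linarith
  have hscalar : (fun t : ℝ => Complex.exp (t * μ)) =O[atTop] fun t => Real.exp (μ.re * t) :=
    isBigO_of_le _ fun t => by simp [Complex.norm_exp, mul_comm]
  have hpoly : (fun t : ℝ => ∑ j ∈ Finset.range k, ((t : ℂ) ^ j / j !) • ((A - μ • 1) ^ j *ᵥ v))
      =O[atTop] fun t => Real.exp ((-ε - μ.re) * t) := by
    refine IsBigO.fun_sum fun j _ => ?_
    refine (IsBigO.of_bound ‖(A - μ • 1) ^ j *ᵥ v‖ (Eventually.of_forall fun t => ?_)).trans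
      (isLittleO_pow_exp_pos_mul_atTop j hδ).isBigO
    rw [norm_smul, norm_div, norm_pow, Complex.norm_real, Complex.norm_natCast, norm_pow, mul_comm]
    exact mul_le_mul_of_nonneg_left
      (div_le_self (by positivity) (Nat.one_le_cast.mpr j.factorial_pos)) (norm_nonneg _)
  refine (hscalar.smul hpoly).congr (fun t => ?_) (fun t => ?_)
  · rw [← Complex.coe_smul, exp_smul_mulVec_of_pow_sub_smul_mulVec_eq_zero A μ _ hv]
  · rw [smul_eq_mul, ← Real.exp_add]
    ring_nf

theorem isBigO_exp_smul_mulVec_of_re_lt (A : Matrix n n ℂ) {ε : ℝ}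
    (hA : ∀ μ ∈ spectrum ℂ A, μ.re < -ε) (v : n → ℂ) :
    (fun t : ℝ => exp (t • A) *ᵥ v) =O[atTop] fun t => Real.exp (-ε * t) := by
  have hv : v ∈ ⨆ μ, Module.End.maxGenEigenspace (toLin' A) μ := by
    rw [Module.End.iSup_maxGenEigenspace_eq_top]; trivial
  refine Submodule.iSup_induction _ (motive := fun w =>
    (fun t : ℝ => exp (t • A) *ᵥ w) =O[atTop] fun t => Real.exp (-ε * t)) hv ?_ ?_ ?_
  · intro μ w hw
    rcases eq_or_ne w 0 with rfl | hw0
    · exact (isBigO_zero _ _).congr_left fun t => (mulVec_zero _).symm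
    have hμ : μ ∈ spectrum ℂ A := by
      rw [← spectrum_toLin', ← Module.End.hasEigenvalue_iff_mem_spectrum]
      exact (Module.End.hasUnifEigenvalue_iff_hasUnifEigenvalue_one (by simp)).mp
        ((Submodule.ne_bot_iff _).mpr ⟨w, hw, hw0⟩)
    refine isBigO_exp_smul_mulVec_of_pow_sub_smul_mulVec_eq_zero A (hA μ hμ)
      (k := Fintype.card n) ?_
    rw [Module.End.maxGenEigenspace_eq_genEigenspace_finrank, Module.finrank_fintype_fun_eq_card,
      Module.End.mem_genEigenspace_nat, LinearMap.mem_ker] at hw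
    have hlin : (toLin' A - μ • 1) ^ Fintype.card n =
        toLinAlgEquiv' ((A - μ • 1) ^ Fintype.card n) := by
      rw [map_pow, map_sub, map_smul, map_one]; rfl
    rwa [hlin, toLinAlgEquiv'_apply] at hw
  · exact (isBigO_zero _ _).congr_left fun t => (mulVec_zero _).symm
  · intro w₁ w₂ h₁ h₂
    simpa only [mulVec_add] using h₁.add h₂

theorem isBigO_exp_smul_of_re_lt (A : Matrix n n ℂ) {ε : ℝ}
    (hA : ∀ μ ∈ spectrum ℂ A, μ.re < -ε) :
    (fun t : ℝ => exp (t • A)) =O[atTop] fun t => Real.exp (-ε * t) := by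
  let ofCols : (n → n → ℂ) →L[ℂ] Matrix n n ℂ :=
    LinearMap.toContinuousLinearMap
      ((transposeLinearEquiv n n ℂ ℂ).toLinearMap ∘ₗ (ofLinearEquiv ℂ).toLinearMap)
  have hcols : (fun t : ℝ => fun j => exp (t • A) *ᵥ Pi.single j 1) =O[atTop]
      fun t => Real.exp (-ε * t) :=
    isBigO_pi.mpr fun j => isBigO_exp_smul_mulVec_of_re_lt A hA _
  refine ((ofCols.isBigO_comp _ _).trans hcols).congr_left fun t => ?_
  ext i j
  change (exp (t • A) *ᵥ Pi.single j 1) i = exp (t • A) i j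
  rw [mulVec_single_one, col_apply]

theorem exists_isBigO_exp_smul_of_re_neg (A : Matrix n n ℂ) (hA : ∀ μ ∈ spectrum ℂ A, μ.re < 0) :
    ∃ ε > 0, (fun t : ℝ => exp (t • A)) =O[atTop] fun t => Real.exp (-ε * t) := by
  have hε : ∀ᶠ ε in 𝓝[>] (0 : ℝ), ∀ μ ∈ spectrum ℂ A, μ.re < -ε := by
    refine (eventually_all_finite (finite_spectrum A)).mpr fun μ hμ => ?_
    filter_upwards [nhdsWithin_le_nhds (eventually_lt_nhds (neg_pos.mpr (hA μ hμ)))] with ε hε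
    linarith
  obtain ⟨ε, hεA, hεpos⟩ := (hε.and self_mem_nhdsWithin).exists
  exact ⟨ε, hεpos, isBigO_exp_smul_of_re_lt A hεA⟩

end Matrix

theorem integrableOn_Ioi_of_isBigO_exp_neg {E : Type*} [NormedAddCommGroup E] {f : ℝ → E}
    {a b : ℝ} (hb : 0 < b) (hf : ContinuousOn f (Ici a))
    (ho : f =O[atTop] fun x => Real.exp (-b * x)) : IntegrableOn f (Ioi a) :=
  Iff.mp integrableOn_Ici_iff_integrableOn_Ioi <|
    (hf.locallyIntegrableOn measurableSet_Ici).integrableOn_of_isBigO_atTop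
      ho ⟨Ioi b, Ioi_mem_atTop b, exp_neg_integrableOn_Ioi b hb⟩

theorem mul_integral_sub_integral_mul_eq_of_tendsto {𝔸 : Type*} [NormedRing 𝔸]
    [NormedAlgebra ℝ 𝔸] [CompleteSpace 𝔸] (a b c : 𝔸)
    (hint : IntegrableOn (fun t : ℝ => exp ((-t) • a) * c * exp (t • b)) (Ioi 0))
    (hlim : Tendsto (fun t : ℝ => exp ((-t) • a) * c * exp (t • b)) atTop (𝓝 0)) :
    a * (∫ t in Ioi (0 : ℝ), exp ((-t) • a) * c * exp (t • b))
      - (∫ t in Ioi (0 : ℝ), exp ((-t) • a) * c * exp (t • b)) * b = c := by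
  set F : ℝ → 𝔸 := fun t => exp ((-t) • a) * c * exp (t • b)
  set T : 𝔸 →L[ℝ] 𝔸 := ContinuousLinearMap.mul ℝ 𝔸 a - (ContinuousLinearMap.mul ℝ 𝔸).flip b
  have hT : ∀ x, T x = a * x - x * b := fun x => rfl
  have hderiv : ∀ t, HasDerivAt F (-T (F t)) t := by
    intro t
    have ha : HasDerivAt (fun u : ℝ => exp ((-u) • a)) (-a * exp ((-t) • a)) t := by
      simpa only [neg_smul, smul_neg] using hasDerivAt_exp_smul_const' (-a) t
    refine ((ha.mul_const c).mul (hasDerivAt_exp_smul_const b t)).congr_deriv ?_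
    simp only [hT, F]
    noncomm_ring
  have hftc : ∫ t in Ioi (0 : ℝ), -T (F t) = 0 - F 0 :=
    integral_Ioi_of_hasDerivAt_of_tendsto' (fun t _ => hderiv t) (T.integrable_comp hint).neg hlim
  have hF0 : F 0 = c := by simp [F]
  rwa [integral_neg, hF0, zero_sub, neg_inj, T.integral_comp_comm hint] at hftc

/-- If every eigenvalue of `Ap` has positive real part and every eigenvalue of
`Am` has negative real part, then `t ↦ exp (-t Ap) * B * exp (t Am)` is integrable on `[0,∞)` and
`X = ∫₀^∞ exp (-t Ap) * B * exp (t Am) dt` solves the Sylvester equation `Ap X - X Am = B`. -/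
theorem sylvester_solution_integral {m : ℕ} (Ap Am B : Matrix (Fin m) (Fin m) ℂ)
    (hAp : ∀ lam ∈ spectrum ℂ Ap, 0 < lam.re)
    (hAm : ∀ mu ∈ spectrum ℂ Am, mu.re < 0) :
    @IntegrableOn _ _ _ _ (@SeminormedAddGroup.toContinuousENorm _ NormedAddGroup.toSeminormedAddGroup)
      (fun t : ℝ => exp ((-t) • Ap) * B * exp (t • Am)) (Set.Ici 0) volume ∧
    Ap * (∫ t in Set.Ici (0:ℝ), exp ((-t) • Ap) * B * exp (t • Am))
      - (∫ t in Set.Ici (0:ℝ), exp ((-t) • Ap) * B * exp (t • Am)) * Am = B := by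
  have hnegAp : ∀ μ ∈ spectrum ℂ (-Ap), μ.re < 0 := by
    rw [← spectrum.neg_eq]
    exact fun μ hμ => by simpa using hAp (-μ) hμ
  obtain ⟨ε₁, hε₁, hdecayAp⟩ := Matrix.exists_isBigO_exp_smul_of_re_neg (-Ap) hnegAp
  obtain ⟨ε₂, hε₂, hdecayAm⟩ := Matrix.exists_isBigO_exp_smul_of_re_neg Am hAm
  have hdecay : (fun t : ℝ => exp ((-t) • Ap) * B * exp (t • Am)) =O[atTop]
      fun t => Real.exp (-(ε₁ + ε₂) * t) := by
    simp only [neg_smul, ← smul_neg]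
    refine ((hdecayAp.mul (isBigO_const_const B one_ne_zero atTop)).mul hdecayAm).congr_right
      fun t => ?_
    rw [mul_one, ← Real.exp_add]
    ring_nf
  have hcont : Continuous fun t : ℝ => exp ((-t) • Ap) * B * exp (t • Am) := by fun_prop
  have hint :=
    integrableOn_Ioi_of_isBigO_exp_neg (a := 0) (by positivity) hcont.continuousOn hdecay
  refine ⟨Iff.mpr integrableOn_Ici_iff_integrableOn_Ioi hint, ?_⟩
  rw [integral_Ici_eq_integral_Ioi]
  exact mul_integral_sub_integral_mul_eq_of_tendsto Ap Am B hint
    (hdecay.trans_tendsto (Real.tendsto_exp_atBot.comp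
      (tendsto_id.const_mul_atTop_of_neg (by linarith))))
end

section
/- Let A⁺, A⁻ ∈ ℂ^{m×m} and suppose there exist α ∈ ℂ with α ≠ 0 and β ∈ ℝ such that every eigenvalue λ of A⁺ satisfies Re(αλ) > β and every eigenvalue μ of A⁻ satisfies Re(αμ) < β. Then for every B ∈ ℂ^{m×m} the function s ↦ exp(−sαA⁺) B exp(sαA⁻) is integrable on [0,∞), and the matrix X = α·∫₀^∞ exp(−sαA⁺) B exp(sαA⁻) ds solves the Sylvester equation A⁺X − XA⁻ = B. -/
/-!
Put `M₁ = -α A⁺`, `M₂ = α A⁻` and `E s = exp (s M₁) B exp (s M₂)`. The separation hypothesis puts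
the spectra of `M₁` and `M₂` in half-planes `Re z < c₁` and `Re z < c₂` with `c₁ + c₂ < 0`.
On a generalized eigenvector of left multiplication by `M` for the eigenvalue `μ`, `exp (s M)` acts
as `e^{sμ}` times a polynomial in `s`; since these vectors span the (finite-dimensional) algebra,
`exp (s M) = O(e^{c s})` whenever the spectrum of `M` lies in `Re z < c`. Hence `E` decays
exponentially, so it is integrable on `[0, ∞)` and tends to `0`. As `E' = M₁ E + E M₂` and
`E 0 = B`, integrating over `[0, ∞)` gives `M₁ X + X M₂ = -B` for `X = ∫ E`, which is the Sylvester
equation for `α X`.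
-/

open NormedSpace MeasureTheory Filter Asymptotics Finset Set
open scoped Nat Topology

theorem IsCompact.exists_lt_of_forall_lt {X α : Type*} [TopologicalSpace X] [LinearOrder α]
    [TopologicalSpace α] [OrderClosedTopology α] [DenselyOrdered α] [NoMinOrder α]
    {K : Set X} (hK : IsCompact K) {f : X → α} (hf : ContinuousOn f K) {b : α}
    (h : ∀ x ∈ K, f x < b) : ∃ c < b, ∀ x ∈ K, f x < c := by
  rcases K.eq_empty_or_nonempty with rfl | hne
  · obtain ⟨c, hc⟩ := exists_lt b
    exact ⟨c, hc, by simp⟩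
  obtain ⟨x, hx, hmax⟩ := hK.exists_isMaxOn hne hf
  obtain ⟨c, hxc, hcb⟩ := exists_between (h x hx)
  exact ⟨c, hcb, fun y hy => (hmax hy).trans_lt hxc⟩

theorem spectrum.mem_of_pow_sub_mul_eq_zero {R A : Type*} [CommRing R] [Ring A] [Algebra R A]
    {a x : A} {μ : R} {k : ℕ} (hx : x ≠ 0) (h : (a - algebraMap R A μ) ^ k * x = 0) :
    μ ∈ spectrum R a := by
  rw [spectrum.mem_iff]
  intro hunit
  have hsub : IsUnit (a - algebraMap R A μ) := by simpa using hunit.neg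
  exact hx ((hsub.pow k).mul_right_eq_zero.mp h)

theorem spectrum.forall_mem_smul_of_ne_zero {𝕜 A : Type*} [Field 𝕜] [Ring A] [Algebra 𝕜 A]
    {α : 𝕜} (hα : α ≠ 0) {a : A} {p : 𝕜 → Prop} (h : ∀ z ∈ spectrum 𝕜 a, p (α * z)) :
    ∀ z ∈ spectrum 𝕜 (α • a), p z := by
  rw [show α • a = Units.mk0 α hα • a from rfl, spectrum.unit_smul_eq_smul]
  rintro _ ⟨z, hz, rfl⟩
  exact h z hz

theorem integrableOn_Ici_of_isBigO_exp_mul {E : Type*} [NormedAddCommGroup E]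
    {f : ℝ → E} (hf : Continuous f) {b : ℝ} (hb : b < 0)
    (ho : f =O[atTop] fun s => Real.exp (b * s)) (a : ℝ) : IntegrableOn f (Ici a) :=
  hf.continuousOn.locallyIntegrableOn measurableSet_Ici |>.integrableOn_of_isBigO_atTop ho
    ⟨Ioi 0, Ioi_mem_atTop 0, by simpa using exp_neg_integrableOn_Ioi 0 (neg_pos.mpr hb)⟩

section

variable {A : Type*} [NormedRing A] [NormedAlgebra ℂ A] [CompleteSpace A]

theorem exp_smul_eq_exp_smul_exp_smul_sub_algebraMap (a : A) (μ t : ℂ) :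
    exp (t • a) = Complex.exp (t * μ) • exp (t • (a - algebraMap ℂ A μ)) := by
  -- `exp_add_of_commute` is stated for normed `ℚ`-algebras
  let : NormedAlgebra ℚ A := .restrictScalars ℚ ℂ A
  have hsplit : t • a = algebraMap ℂ A (t * μ) + t • (a - algebraMap ℂ A μ) := by
    rw [smul_sub, map_mul, ← Algebra.smul_def, add_sub_cancel]
  rw [hsplit, exp_add_of_commute (Algebra.commutes _ _), ← algebraMap_exp_comm,
    ← Algebra.smul_def, Complex.exp_eq_exp_ℂ]

theorem exp_mul_eq_sum_of_pow_mul_eq_zero {n x : A} {k : ℕ} (h : n ^ k * x = 0) :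
    exp n * x = ∑ i ∈ range k, (i !⁻¹ : ℂ) • (n ^ i * x) := by
  refine ((exp_series_hasSum_exp' (𝕂 := ℂ) n).mul_right x).unique ?_
  simp_rw [smul_mul_assoc]
  refine hasSum_sum_of_ne_finset_zero fun i hi => ?_
  rw [← Nat.sub_add_cancel (not_lt.mp (mem_range.not.mp hi)), pow_add, mul_assoc, h, mul_zero,
    smul_zero]

theorem exp_smul_mul_eq_of_pow_sub_mul_eq_zero {a x : A} {μ : ℂ} {k : ℕ}
    (h : (a - algebraMap ℂ A μ) ^ k * x = 0) (t : ℂ) :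
    exp (t • a) * x = Complex.exp (t * μ) •
      ∑ i ∈ range k, (t ^ i / i !) • ((a - algebraMap ℂ A μ) ^ i * x) := by
  have ht : (t • (a - algebraMap ℂ A μ)) ^ k * x = 0 := by
    rw [smul_pow, smul_mul_assoc, h, smul_zero]
  rw [exp_smul_eq_exp_smul_exp_smul_sub_algebraMap a μ, smul_mul_assoc,
    exp_mul_eq_sum_of_pow_mul_eq_zero ht]
  simp_rw [smul_pow, smul_mul_assoc, smul_smul, div_eq_inv_mul]

theorem isBigO_exp_smul_mul_of_pow_sub_mul_eq_zero {a x : A} {μ : ℂ} {k : ℕ}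
    (h : (a - algebraMap ℂ A μ) ^ k * x = 0) {c : ℝ} (hμc : μ.re < c) :
    (fun s : ℝ => exp ((s : ℂ) • a) * x) =O[atTop] fun s => Real.exp (c * s) := by
  set w : ℕ → A := fun i => (a - algebraMap ℂ A μ) ^ i * x
  have hexp : (fun s : ℝ => Complex.exp (s * μ)) =O[atTop] fun s => Real.exp (μ.re * s) :=
    isBigO_of_le _ fun s : ℝ => (by simp [Complex.norm_exp, mul_comm] :
      ‖Complex.exp (s * μ)‖ ≤ ‖Real.exp (μ.re * s)‖)
  have hpoly : (fun s : ℝ => ∑ i ∈ range k, ((s : ℂ) ^ i / i !) • w i) =O[atTop]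
      fun s => Real.exp ((c - μ.re) * s) := by
    refine IsBigO.fun_sum fun i _ => ?_
    have hmono : (fun s : ℝ => ((s : ℂ) ^ i / i !) • w i) =O[atTop] fun s => s ^ i :=
      IsBigO.of_bound (‖w i‖) (Eventually.of_forall fun s => by
        rw [norm_smul, norm_div, norm_pow, Complex.norm_real, Complex.norm_natCast, norm_pow,
          mul_comm]
        gcongr
        exact div_le_self (by positivity) (by exact_mod_cast i.factorial_pos))
    exact hmono.trans (isLittleO_pow_exp_pos_mul_atTop i (sub_pos.mpr hμc)).isBigO
  simp_rw [exp_smul_mul_eq_of_pow_sub_mul_eq_zero h]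
  refine (hexp.smul hpoly).congr_right fun s => ?_
  rw [smul_eq_mul, ← Real.exp_add, ← add_mul, add_sub_cancel]

theorem isBigO_exp_smul_atTop [FiniteDimensional ℂ A] {a : A} {c : ℝ}
    (h : ∀ z ∈ spectrum ℂ a, z.re < c) :
    (fun s : ℝ => exp ((s : ℂ) • a)) =O[atTop] fun s => Real.exp (c * s) := by
  suffices ∀ x : A, (fun s : ℝ => exp ((s : ℂ) • a) * x) =O[atTop] fun s => Real.exp (c * s) by
    simpa using this 1
  intro x
  have hx : x ∈ ⨆ μ, (Algebra.lmul ℂ A a).maxGenEigenspace μ := by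
    rw [Module.End.iSup_maxGenEigenspace_eq_top]; trivial
  refine Submodule.iSup_induction (motive := fun x =>
    (fun s : ℝ => exp ((s : ℂ) • a) * x) =O[atTop] fun s => Real.exp (c * s)) _ hx
    (fun μ y hy => ?_) (by simpa using isBigO_zero _ _)
    fun y z hy hz => by simpa only [mul_add] using hy.add hz
  obtain ⟨k, hk⟩ := (Module.End.mem_maxGenEigenspace _ _ _).mp hy
  have hk' : (a - algebraMap ℂ A μ) ^ k * y = 0 := by
    rwa [← Algebra.algebraMap_eq_smul_one, ← (Algebra.lmul ℂ A).commutes, ← map_sub, ← map_pow]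
      at hk
  rcases eq_or_ne y 0 with rfl | hy0
  · simpa using isBigO_zero _ _
  exact isBigO_exp_smul_mul_of_pow_sub_mul_eq_zero hk'
    (h μ (spectrum.mem_of_pow_sub_mul_eq_zero hy0 hk'))

noncomputable def sylvesterIntegrand (a b d : A) (s : ℝ) : A :=
  exp ((s : ℂ) • a) * b * exp ((s : ℂ) • d)

theorem hasDerivAt_sylvesterIntegrand (a b d : A) (s : ℝ) :
    HasDerivAt (sylvesterIntegrand a b d)
      (a * sylvesterIntegrand a b d s + sylvesterIntegrand a b d s * d) s := by
  have h := ((hasDerivAt_exp_smul_const' a (s : ℂ)).mul_const b).mul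
    (hasDerivAt_exp_smul_const d (s : ℂ))
  have h' := h.scomp s Complex.ofRealCLM.hasDerivAt
  rw [Complex.ofRealCLM_apply, Complex.ofReal_one, one_smul] at h'
  refine (h' : HasDerivAt (sylvesterIntegrand a b d) _ s).congr_deriv ?_
  simp only [sylvesterIntegrand, mul_assoc]

theorem continuous_sylvesterIntegrand (a b d : A) : Continuous (sylvesterIntegrand a b d) :=
  continuous_iff_continuousAt.mpr fun s => (hasDerivAt_sylvesterIntegrand a b d s).continuousAt

theorem isBigO_sylvesterIntegrand [FiniteDimensional ℂ A] {a d : A} {c₁ c₂ : ℝ}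
    (ha : ∀ z ∈ spectrum ℂ a, z.re < c₁) (hd : ∀ z ∈ spectrum ℂ d, z.re < c₂) (b : A) :
    sylvesterIntegrand a b d =O[atTop] fun s => Real.exp ((c₁ + c₂) * s) := by
  have h := ((isBigO_exp_smul_atTop ha).mul (isBigO_const_const b one_ne_zero atTop)).mul
    (isBigO_exp_smul_atTop hd)
  refine h.congr_right fun s => ?_
  rw [mul_one, ← Real.exp_add, add_mul]

theorem mul_integral_sylvesterIntegrand_add_integral_mul (a b d : A)
    (hint : IntegrableOn (sylvesterIntegrand a b d) (Ici 0))
    (hlim : Tendsto (sylvesterIntegrand a b d) atTop (𝓝 0)) :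
    a * (∫ s in Ici 0, sylvesterIntegrand a b d s) + (∫ s in Ici 0, sylvesterIntegrand a b d s) * d
      = -b := by
  have hint' : IntegrableOn
      (fun s => a * sylvesterIntegrand a b d s + sylvesterIntegrand a b d s * d) (Ioi 0) :=
    IntegrableOn.mono_set ((hint.const_mul a).add (hint.mul_const d)) Ioi_subset_Ici_self
  have hftc := integral_Ioi_of_hasDerivAt_of_tendsto'
    (fun s _ => hasDerivAt_sylvesterIntegrand a b d s) hint' hlim
  rw [← integral_const_mul_of_integrable hint, ← integral_mul_const_of_integrable hint,
    ← integral_add (hint.const_mul a) (hint.mul_const d), integral_Ici_eq_integral_Ioi, hftc]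
  simp [sylvesterIntegrand]

theorem sylvesterIntegrand_integrableOn_and_solves [FiniteDimensional ℂ A] {a d : A} {c₁ c₂ : ℝ}
    (ha : ∀ z ∈ spectrum ℂ a, z.re < c₁) (hd : ∀ z ∈ spectrum ℂ d, z.re < c₂)
    (hc : c₁ + c₂ < 0) (b : A) :
    IntegrableOn (sylvesterIntegrand a b d) (Ici 0) ∧
      a * (∫ s in Ici 0, sylvesterIntegrand a b d s)
        + (∫ s in Ici 0, sylvesterIntegrand a b d s) * d = -b := by
  have hO := isBigO_sylvesterIntegrand ha hd b
  have hint := integrableOn_Ici_of_isBigO_exp_mul (continuous_sylvesterIntegrand a b d) hc hO 0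
  have hlim : Tendsto (sylvesterIntegrand a b d) atTop (𝓝 0) :=
    hO.trans_tendsto (Real.tendsto_exp_atBot.comp (tendsto_id.const_mul_atTop_of_neg hc))
  exact ⟨hint, mul_integral_sylvesterIntegrand_add_integral_mul a b d hint hlim⟩

end

attribute [local instance] Matrix.linftyOpNormedRing Matrix.linftyOpNormedAlgebra
  Matrix.linftyOpNormedSpace

/-- If the spectra of `Ap` and `Am` are separated by the line
`{ζ : Re (α ζ) = β}`, with `Re (α λ) > β` on `spec Ap` and `Re (α μ) < β` on `spec Am`, then for
every `B` the function `s ↦ exp (-s α Ap) * B * exp (s α Am)` is integrable on `[0,∞)` and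
`X = α • ∫₀^∞ exp (-s α Ap) * B * exp (s α Am) ds` solves `Ap X - X Am = B`. -/
theorem sylvester_solution_ray_integral {m : ℕ} (Ap Am B : Matrix (Fin m) (Fin m) ℂ)
    (α : ℂ) (hα : α ≠ 0) (β : ℝ)
    (hAp : ∀ lam ∈ spectrum ℂ Ap, β < (α * lam).re)
    (hAm : ∀ mu ∈ spectrum ℂ Am, (α * mu).re < β) :
    @IntegrableOn _ _ _ _ SeminormedAddGroup.toContinuousENorm
      (fun s : ℝ => exp ((-((s : ℂ) * α)) • Ap) * B * exp (((s : ℂ) * α) • Am))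
      (Set.Ici 0) volume ∧
    Ap * (α • ∫ s in Set.Ici (0:ℝ),
        exp ((-((s : ℂ) * α)) • Ap) * B * exp (((s : ℂ) * α) • Am))
      - (α • ∫ s in Set.Ici (0:ℝ),
        exp ((-((s : ℂ) * α)) • Ap) * B * exp (((s : ℂ) * α) • Am)) * Am = B := by
  set M₁ := (-α) • Ap
  set M₂ := α • Am
  have hE : (fun s : ℝ => exp ((-((s : ℂ) * α)) • Ap) * B * exp (((s : ℂ) * α) • Am))
      = sylvesterIntegrand M₁ B M₂ := by
    funext s
    simp only [sylvesterIntegrand, M₁, M₂, smul_smul, mul_neg]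
    rfl
  have hM₁ : ∀ z ∈ spectrum ℂ M₁, z.re < -β :=
    spectrum.forall_mem_smul_of_ne_zero (neg_ne_zero.mpr hα) fun z hz => by
      simpa using neg_lt_neg (hAp z hz)
  have hM₂ : ∀ z ∈ spectrum ℂ M₂, z.re < β := spectrum.forall_mem_smul_of_ne_zero hα hAm
  obtain ⟨c₁, hc₁, h₁⟩ :=
    (spectrum.isCompact M₁).exists_lt_of_forall_lt Complex.continuous_re.continuousOn hM₁
  obtain ⟨c₂, hc₂, h₂⟩ :=
    (spectrum.isCompact M₂).exists_lt_of_forall_lt Complex.continuous_re.continuousOn hM₂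
  obtain ⟨hint, hX⟩ := sylvesterIntegrand_integrableOn_and_solves h₁ h₂ (by linarith) B
  rw [hE]
  refine ⟨hint, ?_⟩
  set X := ∫ s in Ici 0, sylvesterIntegrand M₁ B M₂ s
  calc Ap * (α • X) - (α • X) * Am = -(M₁ * X + X * M₂) := by
        simp only [M₁, M₂, smul_mul_assoc, mul_smul_comm, neg_smul, neg_mul]
        abel
    _ = B := by rw [hX, neg_neg]
end

section
/- Let A : ℝ → ℂ^{m×m} be a family of matrices having a full asymptotic expansion with coefficients (A_k)_{k∈ℕ} as ρ → 0. Suppose the spectrum of A₀ is partitioned into finitely many disjoint groups 𝔖₁, …, 𝔖_d whose convex hulls are pairwise disjoint, and for each j let V_j ⊆ ℂ^m be the sum of the generalized eigenspaces of A₀ for the eigenvalues in 𝔖_j (so ℂ^m = V₁ ⊕ ⋯ ⊕ V_d). Then for every N ∈ ℕ there exist matrices M₀, …, M_{N−1} ∈ ℂ^{m×m} with M₀ invertible, and matrices Λ₀, …, Λ_{N−1} ∈ ℂ^{m×m} each of which maps V_j into V_j for every j, such that ‖A(ρ)·(Σ_{k=0}^{N−1} ρ^k M_k) − (Σ_{k=0}^{N−1}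 ρ^k M_k)·(Σ_{k=0}^{N−1} ρ^k Λ_k)‖ = O(|ρ|^N) as ρ → 0. -/
open Filter Asymptotics

attribute [local instance] Matrix.linftyOpNormedRing Matrix.linftyOpNormedAlgebra
  Matrix.linftyOpNormedSpace

/-- A family `A : ℝ → ℂ^{m×m}` has a full asymptotic expansion with coefficients `Ak` as
`ρ → 0`: for every `N` there are `C, ε > 0` with
`‖A ρ - ∑_{k<N} ρ^k Ak k‖ ≤ C |ρ|^N` for all `|ρ| ≤ ε`. -/
def HasFullAsymptoticExpansion {m : ℕ} (A : ℝ → Matrix (Fin m) (Fin m) ℂ)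
    (Ak : ℕ → Matrix (Fin m) (Fin m) ℂ) : Prop :=
  ∀ N : ℕ, ∃ C ε : ℝ, 0 < C ∧ 0 < ε ∧ ∀ ρ : ℝ, |ρ| ≤ ε →
    ‖A ρ - ∑ k ∈ Finset.range N, (ρ : ℂ) ^ k • Ak k‖ ≤ C * |ρ| ^ N

/-- The sum of the generalized eigenspaces of `A₀` for the eigenvalues in the group `S`,
i.e. `∑_{λ ∈ S} ker (A₀ - λ I)^m`, as a subspace of `ℂ^m`. -/
noncomputable def groupSpace {m : ℕ} (A₀ : Matrix (Fin m) (Fin m) ℂ) (S : Set ℂ) :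
    Submodule ℂ (Fin m → ℂ) :=
  ⨆ lam ∈ S, LinearMap.ker (Matrix.toLin' ((A₀ - lam • (1 : Matrix (Fin m) (Fin m) ℂ)) ^ m))

/-!
Encode the coefficients as formal power series `a = ∑ Aₖ Xᵏ`, `M` and `Λ` over the matrix ring.
The congruence `a M ≡ M Λ mod X^(N+1)` with `M₀ = 1` and `Λ₀ = A₀` is solved degree by degree: in
degree `k` it reads `⁅A₀, Mₖ⁆ + Cₖ = Λₖ`, where `Cₖ` depends only on lower-order coefficients, and
it has a solution with `Λₖ` block-diagonal because `X ↦ ⁅A₀, X⁆` is onto modulo the block-diagonal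
matrices. By finite dimension it suffices that it is injective modulo them: if `⁅A₀, X⁆` preserves
a sum `V_U` of generalized eigenspaces and `x` lies in the one for `ν ∈ U`, then
`(A₀ - ν)ᵏ X x ≡ X (A₀ - ν)ᵏ x = 0` modulo `V_U`, while `A₀ - ν` is invertible modulo `V_U`
because it is invertible on every other generalized eigenspace.
Evaluating the truncations at `ρ`, `A(ρ) P(ρ) - P(ρ) Q(ρ)` differs by `O(|ρ|^N)` from the value of
a polynomial without coefficients below `N`.
-/

open Topology

namespace Submodule

variable {K V : Type*} [DivisionRing K] [AddCommGroup V] [Module K V] [FiniteDimensional K V]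

theorem comap_eq_self_iff_sup_range_eq_top {g : Module.End K V} {W : Submodule K V}
    (hW : W ≤ W.comap g) : W.comap g = W ↔ W ⊔ LinearMap.range g = ⊤ := by
  rw [← map_mkQ_eq_top, ← range_mapQ W W g hW, LinearMap.range_eq_top,
    ← LinearMap.injective_iff_surjective, ← LinearMap.ker_eq_bot, ker_mapQ, ← le_bot_iff,
    map_le_iff_le_comap, comap_bot, ker_mkQ]
  exact ⟨le_of_eq, fun h => le_antisymm h hW⟩

end Submodule

namespace Module.End

section Ring

variable {R M : Type*} [Ring R] [AddCommGroup M] [Module R M]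

theorem comap_pow_eq_self {g : End R M} {W : Submodule R M} (h : W.comap g = W) (n : ℕ) :
    W.comap (g ^ n) = W := by
  induction n with
  | zero => exact Submodule.comap_id W
  | succ n ih => rw [pow_succ, mul_eq_comp, Submodule.comap_comp, ih, h]

theorem pow_apply_sub_apply_pow_mem {h g : End R M} {W : Submodule R M} (hh : W ≤ W.comap h)
    (hhg : W ≤ W.comap ⁅h, g⁆) (n : ℕ) {y : M} (hy : y ∈ W) :
    (h ^ n) (g y) - g ((h ^ n) y) ∈ W := by
  induction n with
  | zero => simp
  | succ n ih =>
    have hcomm : ⁅h, g⁆ ((h ^ n) y) ∈ W := hhg (W.le_comap_pow_of_le_comap hh n hy)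
    rw [Ring.lie_def] at hcomm
    have key : (h ^ (n + 1)) (g y) - g ((h ^ (n + 1)) y) =
        h ((h ^ n) (g y) - g ((h ^ n) y)) + (h * g - g * h) ((h ^ n) y) := by
      simp only [pow_succ', mul_apply, map_sub, LinearMap.sub_apply]
      abel
    rw [key]
    exact W.add_mem (hh ih) hcomm

end Ring

section CommRing

variable {R M : Type*} [CommRing R] [AddCommGroup M] [Module R M]

def spectralSubspace (f : End R M) (U : Set R) : Submodule R M :=
  ⨆ μ ∈ U, f.maxGenEigenspace μ

theorem spectralSubspace_le_comap (f : End R M) (U : Set R) :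
    f.spectralSubspace U ≤ (f.spectralSubspace U).comap f :=
  iSup₂_le fun μ hμ _ hx =>
    le_biSup (f.maxGenEigenspace ·) hμ (mapsTo_maxGenEigenspace_of_comm (Commute.refl f) μ hx)

end CommRing

variable {K V : Type*} [Field K] [AddCommGroup V] [Module K V] [FiniteDimensional K V]

theorem maxGenEigenspace_le_range_sub {f : End K V} {μ ν : K} (h : μ ≠ ν) :
    f.maxGenEigenspace μ ≤ LinearMap.range (f - algebraMap K (End K V) ν) := by
  have hmaps : Set.MapsTo (f - algebraMap K (End K V) ν) (f.maxGenEigenspace μ)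
      (f.maxGenEigenspace μ) :=
    mapsTo_maxGenEigenspace_of_comm (Algebra.mul_sub_algebraMap_commutes f ν) μ
  have hsplit : (f - algebraMap K (End K V) ν).restrict hmaps =
      (f - algebraMap K (End K V) μ).restrict
          (mapsTo_maxGenEigenspace_of_comm (Algebra.mul_sub_algebraMap_commutes f μ) μ) +
        algebraMap K _ (μ - ν) := by
    ext x
    change (f - algebraMap K _ ν) x = (f - algebraMap K _ μ) x + (μ - ν) • (x : V)
    simp only [LinearMap.sub_apply, Module.algebraMap_end_apply, sub_smul, sub_add_sub_cancel]
  have hunit : IsUnit ((f - algebraMap K (End K V) ν).restrict hmaps) := by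
    rw [hsplit]
    exact (isNilpotent_restrict_maxGenEigenspace_sub_algebraMap f μ).isUnit_add_right_of_commute
      ((sub_ne_zero.mpr h).isUnit.map _) (Algebra.commutes _ _).symm
  intro x hx
  obtain ⟨y, hy⟩ := (End.isUnit_iff _).mp hunit |>.2 ⟨x, hx⟩
  exact ⟨y, congrArg Subtype.val hy⟩

variable [IsAlgClosed K]

theorem comap_sub_smul_spectralSubspace (f : End K V) {U : Set K} {ν : K} (hν : ν ∈ U) :
    (f.spectralSubspace U).comap (f - ν • 1) = f.spectralSubspace U := by
  rw [← Algebra.algebraMap_eq_smul_one]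
  have hinv : f.spectralSubspace U ≤ (f.spectralSubspace U).comap (f - algebraMap K _ ν) :=
    fun x hx => by
      simpa [Module.algebraMap_end_apply] using
        (f.spectralSubspace U).sub_mem (f.spectralSubspace_le_comap U hx)
          ((f.spectralSubspace U).smul_mem ν hx)
  refine (Submodule.comap_eq_self_iff_sup_range_eq_top hinv).mpr (eq_top_iff.mpr ?_)
  rw [← f.iSup_maxGenEigenspace_eq_top]
  refine iSup_le fun μ => ?_
  rcases eq_or_ne μ ν with rfl | hμν
  · exact le_sup_of_le_left (le_biSup (f.maxGenEigenspace ·) hν)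
  · exact le_sup_of_le_right (maxGenEigenspace_le_range_sub hμν)

theorem spectralSubspace_le_comap_of_le_comap_lie {f g : End K V} {U : Set K}
    (hfg : f.spectralSubspace U ≤ (f.spectralSubspace U).comap ⁅f, g⁆) :
    f.spectralSubspace U ≤ (f.spectralSubspace U).comap g := by
  refine iSup₂_le fun ν hν x hx => ?_
  obtain ⟨k, hk⟩ := (mem_maxGenEigenspace f ν x).mp hx
  have hcomap := f.comap_sub_smul_spectralSubspace hν
  have hlie : ⁅f - ν • 1, g⁆ = ⁅f, g⁆ := by
    simp [Ring.lie_def, sub_mul, mul_sub]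
  have hmem := pow_apply_sub_apply_pow_mem hcomap.ge (hlie ▸ hfg) k
    (le_biSup (f.maxGenEigenspace ·) hν hx)
  rw [hk, map_zero, sub_zero] at hmem
  rw [← comap_pow_eq_self hcomap k]
  exact hmem

theorem exists_lie_add_mem_iInf_compatibleMaps {ι : Type*} (f : End K V) (S : ι → Set K)
    (c : End K V) : ∃ x : End K V, ⁅f, x⁆ + c ∈
      ⨅ j, Submodule.compatibleMaps (f.spectralSubspace (S j)) (f.spectralSubspace (S j)) := by
  set W := ⨅ j, Submodule.compatibleMaps (f.spectralSubspace (S j)) (f.spectralSubspace (S j))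
  have hmem : ∀ g : End K V, g ∈ W ↔
      ∀ j, f.spectralSubspace (S j) ≤ (f.spectralSubspace (S j)).comap g := fun g =>
    Submodule.mem_iInf _
  have hW : W.comap (LinearMap.mulLeft K f - LinearMap.mulRight K f) = W := by
    ext g
    rw [Submodule.mem_comap, LinearMap.sub_apply, LinearMap.mulLeft_apply,
      LinearMap.mulRight_apply, ← Ring.lie_def, hmem, hmem]
    refine forall_congr' fun j => ⟨spectralSubspace_le_comap_of_le_comap_lie, fun hg y hy => ?_⟩
    rw [Submodule.mem_comap, Ring.lie_def, LinearMap.sub_apply, mul_apply, mul_apply]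
    exact sub_mem (f.spectralSubspace_le_comap _ (hg hy)) (hg (f.spectralSubspace_le_comap _ hy))
  obtain ⟨w, hw, _, ⟨x, rfl⟩, hwx⟩ :=
    Submodule.mem_sup.mp ((Submodule.comap_eq_self_iff_sup_range_eq_top hW.ge).mp hW ▸
      Submodule.mem_top (x := -c))
  refine ⟨x, ?_⟩
  have hsum : ⁅f, x⁆ + c = -w := by
    rw [neg_eq_iff_eq_neg.mp hwx.symm, Ring.lie_def]
    simp only [LinearMap.sub_apply, LinearMap.mulLeft_apply, LinearMap.mulRight_apply]
    abel
  exact hsum ▸ W.neg_mem hw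

end Module.End

namespace PowerSeries

variable {R : Type*} [Ring R]

theorem coeff_X_pow_mul_C_mem {W : AddSubgroup R} {n : ℕ} {d : R} (hd : d ∈ W) (k : ℕ) :
    coeff k (X ^ n * C d) ∈ W := by
  rw [coeff_X_pow_mul', coeff_C]
  split_ifs <;> first | exact hd | exact W.zero_mem

/-- Correcting `M` and `Λ` in degree `n + 1` by `x` and `⁅a₀, x⁆ + r₀` changes the coefficient of
degree `n + 1` of `a * M - M * Λ` by `a₀ x - x a₀ - (⁅a₀, x⁆ + r₀)`, which cancels `r₀`. -/
theorem X_pow_add_two_dvd_mul_add_sub_mul_add {a M Λ r : R⟦X⟧} {n : ℕ} (x : R)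
    (hM : constantCoeff M = 1) (hΛ : constantCoeff Λ = constantCoeff a)
    (hr : a * M - M * Λ = X ^ (n + 1) * r) :
    X ^ (n + 2) ∣ a * (M + X ^ (n + 1) * C x) - (M + X ^ (n + 1) * C x) *
      (Λ + X ^ (n + 1) * C (⁅constantCoeff a, x⁆ + constantCoeff r)) := by
  set d := ⁅constantCoeff a, x⁆ + constantCoeff r
  obtain ⟨s, hs⟩ : X ∣ r + a * C x - C x * Λ - M * C d := by
    rw [X_dvd_iff]
    simp only [map_sub, map_add, map_mul, constantCoeff_C, hM, hΛ, one_mul, d, Ring.lie_def]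
    abel
  have e1 := (commute_X_pow a (n + 1)).left_comm (C x)
  have e2 := (commute_X_pow M (n + 1)).left_comm (C d)
  have e3 : X ^ (n + 1) * C x * (X ^ (n + 1) * C d) = X ^ (n + 1) * X ^ (n + 1) * (C x * C d) := by
    rw [mul_assoc, (commute_X_pow (C x) (n + 1)).left_comm, mul_assoc]
  refine ⟨s - X ^ n * (C x * C d), ?_⟩
  calc a * (M + X ^ (n + 1) * C x) - (M + X ^ (n + 1) * C x) * (Λ + X ^ (n + 1) * C d)
      = (a * M - M * Λ) + X ^ (n + 1) * (a * C x - C x * Λ - M * C d)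
        - X ^ (n + 1) * X ^ (n + 1) * (C x * C d) := by
        simp only [mul_add, add_mul]
        rw [e1, e2, e3, mul_assoc (X ^ (n + 1)) (C x) Λ]
        noncomm_ring
    _ = X ^ (n + 1) * (r + a * C x - C x * Λ - M * C d)
        - X ^ (n + 1) * X ^ (n + 1) * (C x * C d) := by
        rw [hr]
        noncomm_ring
    _ = X ^ (n + 2) * (s - X ^ n * (C x * C d)) := by
        rw [hs]
        simp only [pow_succ, mul_assoc, mul_sub]
        rw [← (commute_X_pow X n).left_comm (C x * C d)]

theorem exists_X_pow_dvd_mul_sub_mul (a : R⟦X⟧) (W : AddSubgroup R)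
    (ha : constantCoeff a ∈ W) (hsolve : ∀ c, ∃ x, ⁅constantCoeff a, x⁆ + c ∈ W) (N : ℕ) :
    ∃ M Λ : R⟦X⟧, constantCoeff M = 1 ∧ (∀ k, coeff k Λ ∈ W) ∧ X ^ (N + 1) ∣ a * M - M * Λ := by
  induction N with
  | zero =>
    refine ⟨1, C (constantCoeff a), map_one _, fun k => ?_, ?_⟩
    · simpa using coeff_X_pow_mul_C_mem (n := 0) ha k
    · rw [zero_add, pow_one, X_dvd_iff]
      simp
  | succ N ih =>
    obtain ⟨M, Λ, hM, hΛ, r, hr⟩ := ih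
    have hΛ₀ : constantCoeff Λ = constantCoeff a := by
      have h₀ := congrArg constantCoeff hr
      simp only [map_sub, map_mul, map_pow, hM, mul_one, one_mul, constantCoeff_X,
        zero_pow N.succ_ne_zero, zero_mul] at h₀
      exact (sub_eq_zero.mp h₀).symm
    obtain ⟨x, hx⟩ := hsolve (constantCoeff r)
    exact ⟨_, _, by simp [hM], fun k => W.add_mem (hΛ k) (coeff_X_pow_mul_C_mem hx k),
      X_pow_add_two_dvd_mul_add_sub_mul_add x hM hΛ₀ hr⟩

end PowerSeries

theorem Polynomial.eval_algebraMap_mul {S R : Type*} [CommSemiring S] [Semiring R] [Algebra S R]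
    (p q : Polynomial R) (c : S) :
    (p * q).eval (algebraMap S R c) = p.eval (algebraMap S R c) * q.eval (algebraMap S R c) :=
  Polynomial.eval₂_mul_noncomm _ _ fun _ => (Algebra.commutes c _).symm

namespace PowerSeries

theorem eval_trunc_algebraMap {S R : Type*} [CommSemiring S] [Semiring R] [Algebra S R]
    (N : ℕ) (φ : R⟦X⟧) (c : S) :
    (trunc N φ).eval (algebraMap S R c) = ∑ k ∈ Finset.range N, c ^ k • coeff k φ := by
  rw [trunc_apply, ← Finset.range_eq_Ico, Polynomial.eval_finsetSum]
  refine Finset.sum_congr rfl fun k _ => ?_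
  rw [Polynomial.eval_monomial, ← map_pow, ← Algebra.commutes, Algebra.smul_def]

theorem coeff_trunc_mul_trunc {R : Type*} [Semiring R] (φ ψ : R⟦X⟧) {d N : ℕ} (h : d < N) :
    (trunc N φ * trunc N ψ).coeff d = coeff d (φ * ψ) := by
  rw [Polynomial.coeff_mul, coeff_mul]
  refine Finset.sum_congr rfl fun p hp => ?_
  have hsum := Finset.HasAntidiagonal.mem_antidiagonal.mp hp
  rw [coeff_trunc, coeff_trunc, if_pos (by omega), if_pos (by omega)]

end PowerSeries

section Asymptotics

variable {R : Type*} [NormedRing R] [NormedAlgebra ℂ R]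

theorem Polynomial.isBigO_eval_algebraMap_of_coeff_eq_zero {N : ℕ} {p : Polynomial R}
    (hp : ∀ d < N, p.coeff d = 0) :
    (fun ρ : ℝ => p.eval (algebraMap ℂ R ρ)) =O[𝓝 0] fun ρ => |ρ| ^ N := by
  obtain ⟨q, rfl⟩ := Polynomial.X_pow_dvd_iff.mpr hp
  have hq : (fun ρ : ℝ => q.eval (algebraMap ℂ R ρ)) =O[𝓝 0] fun _ => (1 : ℂ) :=
    ((q.continuous.comp (continuous_algebraMap ℂ R)).comp Complex.continuous_ofReal).tendsto 0
      |>.isBigO_one ℂ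
  have hpow : (fun ρ : ℝ => (ρ : ℂ) ^ N) =O[𝓝 0] fun ρ => |ρ| ^ N :=
    isBigO_of_le _ fun ρ => by simp
  have hsmul := (isBigO_refl (fun ρ : ℝ => (ρ : ℂ) ^ N) (𝓝 0)).smul hq
  refine ((hsmul.congr (fun ρ => ?_) fun ρ => mul_one _)).trans hpow
  rw [Polynomial.X_pow_mul, Polynomial.eval_mul_X_pow, ← map_pow,
    ← Algebra.commutes, ← Algebra.smul_def]

open PowerSeries in
theorem isBigO_mul_sum_sub_sum_mul_sum {A : ℝ → R} {a M Λ : R⟦X⟧} {N : ℕ}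
    (hA : (fun ρ : ℝ => A ρ - ∑ k ∈ Finset.range N, (ρ : ℂ) ^ k • coeff k a) =O[𝓝 0]
      fun ρ => |ρ| ^ N)
    (hdvd : X ^ N ∣ a * M - M * Λ) :
    (fun ρ : ℝ => A ρ * (∑ k ∈ Finset.range N, (ρ : ℂ) ^ k • coeff k M)
        - (∑ k ∈ Finset.range N, (ρ : ℂ) ^ k • coeff k M)
          * (∑ k ∈ Finset.range N, (ρ : ℂ) ^ k • coeff k Λ)) =O[𝓝 0] fun ρ => |ρ| ^ N := by
  simp only [← eval_trunc_algebraMap] at hA ⊢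
  have hlow : ∀ d < N, (trunc N a * trunc N M - trunc N M * trunc N Λ).coeff d = 0 := by
    intro d hd
    rw [Polynomial.coeff_sub, coeff_trunc_mul_trunc _ _ hd, coeff_trunc_mul_trunc _ _ hd,
      ← map_sub]
    exact X_pow_dvd_iff.mp hdvd d hd
  have hM : (fun ρ : ℝ => (trunc N M).eval (algebraMap ℂ R ρ)) =O[𝓝 0] fun _ => (1 : ℝ) :=
    (((trunc N M).continuous.comp (continuous_algebraMap ℂ R)).comp
      Complex.continuous_ofReal).tendsto 0 |>.isBigO_one ℝ
  have hAM := (hA.mul hM).congr_right fun ρ => mul_one (|ρ| ^ N)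
  refine (hAM.add (Polynomial.isBigO_eval_algebraMap_of_coeff_eq_zero hlow)).congr_left
    fun ρ => ?_
  simp only [Polynomial.eval_sub, Polynomial.eval_algebraMap_mul]
  noncomm_ring

end Asymptotics

namespace Matrix

variable {ι n : Type*} [Fintype n]

/-- For a decomposition `⨁ j, V j` of `n → R`, these are the block-diagonal matrices. -/
def mapsToSubmodule {R : Type*} [CommSemiring R] (V : ι → Submodule R (n → R)) :
    Submodule R (Matrix n n R) where
  carrier := {X | ∀ j, ∀ x ∈ V j, X *ᵥ x ∈ V j}
  add_mem' ha hb j x hx := by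
    rw [add_mulVec]
    exact add_mem (ha j x hx) (hb j x hx)
  zero_mem' j x _ := by
    rw [zero_mulVec]
    exact zero_mem _
  smul_mem' c X hX j x hx := by
    rw [smul_mulVec]
    exact Submodule.smul_mem _ c (hX j x hx)

variable [DecidableEq n] {K : Type*} [Field K]

theorem self_mem_mapsToSubmodule_spectralSubspace (A₀ : Matrix n n K) (S : ι → Set K) :
    A₀ ∈ mapsToSubmodule fun j => Module.End.spectralSubspace (toLin' A₀) (S j) := fun j _ hx =>
  Module.End.spectralSubspace_le_comap (toLin' A₀) (S j) hx

theorem exists_lie_add_mem_mapsToSubmodule_spectralSubspace [IsAlgClosed K] (A₀ : Matrix n n K)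
    (S : ι → Set K) (C : Matrix n n K) :
    ∃ X, ⁅A₀, X⁆ + C ∈ mapsToSubmodule fun j => Module.End.spectralSubspace (toLin' A₀) (S j) := by
  obtain ⟨x, hx⟩ := Module.End.exists_lie_add_mem_iInf_compatibleMaps (toLin' A₀) S (toLin' C)
  refine ⟨LinearMap.toMatrix' x, fun j y hy => ?_⟩
  have hlin : toLin' (⁅A₀, LinearMap.toMatrix' x⁆ + C) = ⁅toLin' A₀, x⁆ + toLin' C := by
    rw [Ring.lie_def, Ring.lie_def, map_add, map_sub, toLin'_mul, toLin'_mul, toLin'_toMatrix']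
    rfl
  rw [← toLin'_apply, hlin]
  exact (Submodule.mem_iInf _).mp hx j hy

end Matrix

theorem groupSpace_eq_spectralSubspace {m : ℕ} (A₀ : Matrix (Fin m) (Fin m) ℂ) (S : Set ℂ) :
    groupSpace A₀ S = Module.End.spectralSubspace (Matrix.toLin' A₀) S := by
  refine biSup_congr fun μ _ => ?_
  change LinearMap.ker (Matrix.toLinAlgEquiv' ((A₀ - μ • 1) ^ m)) = _
  rw [map_pow, map_sub, map_smul, map_one,
    Module.End.maxGenEigenspace_eq_genEigenspace_finrank, Module.finrank_fin_fun,
    Module.End.genEigenspace_nat]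
  rfl

theorem HasFullAsymptoticExpansion.isBigO {m : ℕ} {A : ℝ → Matrix (Fin m) (Fin m) ℂ}
    {Ak : ℕ → Matrix (Fin m) (Fin m) ℂ} (hA : HasFullAsymptoticExpansion A Ak) (N : ℕ) :
    (fun ρ : ℝ => A ρ - ∑ k ∈ Finset.range N, (ρ : ℂ) ^ k • Ak k) =O[𝓝 0] fun ρ => |ρ| ^ N := by
  obtain ⟨C, ε, -, hε, hbound⟩ := hA N
  refine IsBigO.of_bound C ?_
  filter_upwards [Metric.closedBall_mem_nhds (0 : ℝ) hε] with ρ hρ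
  rw [Real.norm_eq_abs, abs_of_nonneg (by positivity)]
  exact hbound ρ (by simpa using hρ)

theorem block_diagonalisation_finite_order_general {m d : ℕ}
    (A : ℝ → Matrix (Fin m) (Fin m) ℂ) (Ak : ℕ → Matrix (Fin m) (Fin m) ℂ)
    (hA : HasFullAsymptoticExpansion A Ak)
    (S : Fin d → Set ℂ)
    (V : Fin d → Submodule ℂ (Fin m → ℂ))
    (hV : ∀ j, V j = groupSpace (Ak 0) (S j))
    (N : ℕ) :
    ∃ M Λ : ℕ → Matrix (Fin m) (Fin m) ℂ,
      IsUnit (M 0) ∧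
      (∀ k < N, ∀ j, ∀ x ∈ V j, (Λ k).mulVec x ∈ V j) ∧
      (fun ρ : ℝ =>
          A ρ * (∑ k ∈ Finset.range N, (ρ : ℂ) ^ k • M k)
            - (∑ k ∈ Finset.range N, (ρ : ℂ) ^ k • M k)
              * (∑ k ∈ Finset.range N, (ρ : ℂ) ^ k • Λ k))
        =O[nhds 0] fun ρ : ℝ => |ρ| ^ N := by
  obtain rfl : V = fun j => Module.End.spectralSubspace (Matrix.toLin' (Ak 0)) (S j) :=
    funext fun j => (hV j).trans (groupSpace_eq_spectralSubspace _ _)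
  obtain ⟨M, Λ, hM, hΛ, hdvd⟩ := PowerSeries.exists_X_pow_dvd_mul_sub_mul (PowerSeries.mk Ak)
    (Matrix.mapsToSubmodule _).toAddSubgroup
    (by simpa using Matrix.self_mem_mapsToSubmodule_spectralSubspace (Ak 0) S)
    (by simpa using Matrix.exists_lie_add_mem_mapsToSubmodule_spectralSubspace (Ak 0) S) N
  refine ⟨fun k => PowerSeries.coeff k M, fun k => PowerSeries.coeff k Λ, ?_, fun k _ => hΛ k, ?_⟩
  · simp [hM]
  · exact isBigO_mul_sum_sub_sum_mul_sum (by simpa using hA.isBigO N)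
      ((pow_dvd_pow _ N.le_succ).trans hdvd)

/-- Theorem 2 of the paper. If `A(ρ)` has a full asymptotic expansion with
coefficients `Ak` as `ρ → 0` and the spectrum of `A₀ = Ak 0` is partitioned into finitely many
nonempty groups `S j` with pairwise disjoint convex hulls, then for every `N` there are matrices
`M₀, …, M_{N-1}` with `M₀` invertible and matrices `Λ₀, …, Λ_{N-1}`, each block-diagonal in the
sense that it preserves every subspace `V j` of generalized eigenvectors of the group `S j`, such
that `A(ρ) ∑ ρ^k M_k - (∑ ρ^k M_k)(∑ ρ^k Λ_k) = O(|ρ|^N)` as `ρ → 0`. -/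
theorem block_diagonalisation_finite_order {m d : ℕ}
    (A : ℝ → Matrix (Fin m) (Fin m) ℂ) (Ak : ℕ → Matrix (Fin m) (Fin m) ℂ)
    (hA : HasFullAsymptoticExpansion A Ak)
    (S : Fin d → Set ℂ)
    (hcover : spectrum ℂ (Ak 0) = ⋃ j, S j)
    (hne : ∀ j, (S j).Nonempty)
    (hsep : Pairwise fun i j => Disjoint (convexHull ℝ (S i)) (convexHull ℝ (S j)))
    (V : Fin d → Submodule ℂ (Fin m → ℂ))
    (hV : ∀ j, V j = groupSpace (Ak 0) (S j))
    (N : ℕ) :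
    ∃ M Λ : ℕ → Matrix (Fin m) (Fin m) ℂ,
      IsUnit (M 0) ∧
      (∀ k < N, ∀ j, ∀ x ∈ V j, (Λ k).mulVec x ∈ V j) ∧
      (fun ρ : ℝ =>
          A ρ * (∑ k ∈ Finset.range N, (ρ : ℂ) ^ k • M k)
            - (∑ k ∈ Finset.range N, (ρ : ℂ) ^ k • M k)
              * (∑ k ∈ Finset.range N, (ρ : ℂ) ^ k • Λ k))
        =O[nhds 0] fun ρ : ℝ => |ρ| ^ N :=
  block_diagonalisation_finite_order_general A Ak hA S V hV N
end

section
/- Let Υ be a compact metric space, let A : Υ → ℂ^{m×m} be continuous, and let δ > 0 be such that r_spec(exp(A(v))) ≤ exp(−δ/2) for every v ∈ Υ. Then there exists T > 0 such that ‖exp(t·A(v))‖ ≤ (2·exp(−δ/2))^t for all v ∈ Υ and all real t ≥ T. -/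
/-! By Gelfand's formula, for `exp (-δ / 2) < c < 2 exp (-δ / 2)` every `exp (A v)` has a power
`n ≥ 1` with `‖exp (n • A v)‖ < c ^ n`. This strict inequality persists near `v`, so by
compactness finitely many such periods serve all of `Υ`. Peeling off periods by
submultiplicativity reduces `‖exp (t • A w)‖ ≤ C c ^ t` to a compact window of times `t`, where
it holds by continuity, and `C c ^ t ≤ (2 exp (-δ / 2)) ^ t` for large `t`. -/

open NormedSpace

attribute [local instance] Matrix.linftyOpNormedRing Matrix.linftyOpNormedAlgebra
  Matrix.linftyOpNormedSpace

open Filter Set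

theorem le_mul_rpow_of_add_le_rpow_mul {φ : ℝ → ℝ} {c C k : ℝ} (hc : 0 < c)
    (hk : 0 < k) (hstep : ∀ s, 0 ≤ s → φ (s + k) ≤ c ^ k * φ s)
    (hbase : ∀ s ∈ Icc 0 k, φ s ≤ C * c ^ s) {t : ℝ} (ht : 0 ≤ t) : φ t ≤ C * c ^ t := by
  have hind : ∀ n : ℕ, ∀ s ∈ Icc 0 ((n + 1) * k), φ s ≤ C * c ^ s := by
    intro n
    induction n with
    | zero => simpa using hbase
    | succ n ih =>
      rintro s ⟨hs0, hs⟩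
      rcases le_total s k with hsk | hks
      · exact hbase s ⟨hs0, hsk⟩
      · calc φ s = φ (s - k + k) := by rw [sub_add_cancel]
          _ ≤ c ^ k * φ (s - k) := hstep _ (sub_nonneg.mpr hks)
          _ ≤ c ^ k * (C * c ^ (s - k)) := by
            gcongr
            exact ih _ ⟨sub_nonneg.mpr hks, by push_cast at hs; linarith⟩
          _ = C * c ^ s := by rw [Real.rpow_sub hc]; field_simp
  obtain ⟨n, hn⟩ := exists_nat_ge (t / k)
  refine hind n t ⟨ht, ?_⟩
  rw [div_le_iff₀ hk] at hn
  nlinarith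

theorem CompactSpace.exists_forall_exists_le_mem {X : Type*} [TopologicalSpace X]
    [CompactSpace X] {U : ℕ → Set X} (hU : ∀ n, IsOpen (U n)) (hcover : ∀ x, ∃ n, x ∈ U n) :
    ∃ N, ∀ x, ∃ n ≤ N, x ∈ U n := by
  obtain ⟨N, hN⟩ := isCompact_univ.elim_directed_cover (fun N => ⋃ n ≤ N, U n)
    (fun N => isOpen_biUnion fun n _ => hU n)
    (fun x _ => mem_iUnion.mpr ((hcover x).imp fun n hn => mem_biUnion le_rfl hn))
    (Monotone.directed_le fun _ _ hNM =>
      biUnion_mono (fun _ hn => le_trans hn hNM) fun _ _ => le_rfl)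
  exact ⟨N, fun x => by simpa using hN (mem_univ x)⟩

theorem eventually_mul_rpow_le_rpow {c d : ℝ} (hc : 0 < c) (hcd : c < d) (C : ℝ) :
    ∀ᶠ t : ℝ in atTop, C * c ^ t ≤ d ^ t := by
  have hgrowth := tendsto_rpow_atTop_of_base_gt_one (d / c) ((one_lt_div hc).mpr hcd)
  filter_upwards [hgrowth.eventually_ge_atTop C] with t ht
  calc C * c ^ t ≤ (d / c) ^ t * c ^ t := by gcongr
    _ = d ^ t := by rw [Real.div_rpow (hc.trans hcd).le hc.le, div_mul_cancel₀ _ (by positivity)]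

section BanachAlgebra

variable {𝔸 : Type*} [NormedRing 𝔸] [CompleteSpace 𝔸]

theorem eventually_norm_pow_lt_of_spectralRadius_lt [NormedAlgebra ℂ 𝔸] {a : 𝔸} {c : ℝ}
    (h : spectralRadius ℂ a < ENNReal.ofReal c) : ∀ᶠ n : ℕ in atTop, ‖a ^ n‖ < c ^ n := by
  have hc : 0 < c := ENNReal.ofReal_pos.mp (pos_of_gt h)
  have hgelfand := spectrum.pow_norm_pow_one_div_tendsto_nhds_spectralRadius a
  filter_upwards [hgelfand.eventually_lt_const h, eventually_gt_atTop 0] with n hn hn0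
  rwa [ENNReal.ofReal_lt_ofReal_iff hc, one_div,
    Real.rpow_inv_lt_iff_of_pos (norm_nonneg _) hc.le (by positivity), Real.rpow_natCast] at hn

variable [NormedAlgebra ℚ 𝔸]

section Real

variable [NormedAlgebra ℝ 𝔸]

theorem norm_exp_add_smul_le (a : 𝔸) (s t : ℝ) :
    ‖exp ((s + t) • a)‖ ≤ ‖exp (s • a)‖ * ‖exp (t • a)‖ := by
  rw [add_smul, exp_add_of_commute (((Commute.refl a).smul_left s).smul_right t)]
  exact norm_mul_le _ _

theorem norm_exp_smul_le_mul_rpow {a : 𝔸} {c C k : ℝ} (hc : 0 < c) (hk : 0 < k)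
    (hperiod : ‖exp (k • a)‖ ≤ c ^ k) (hbase : ∀ s ∈ Icc 0 k, ‖exp (s • a)‖ ≤ C * c ^ s)
    {t : ℝ} (ht : 0 ≤ t) : ‖exp (t • a)‖ ≤ C * c ^ t := by
  refine le_mul_rpow_of_add_le_rpow_mul hc hk (fun s _ => ?_) hbase ht
  calc ‖exp ((s + k) • a)‖ ≤ ‖exp (s • a)‖ * ‖exp (k • a)‖ := norm_exp_add_smul_le a s k
    _ ≤ ‖exp (s • a)‖ * c ^ k := by gcongr
    _ = c ^ k * ‖exp (s • a)‖ := mul_comm _ _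

end Real

theorem exists_forall_norm_exp_smul_le_mul_rpow [NormedAlgebra ℂ 𝔸] {X : Type*}
    [TopologicalSpace X] [CompactSpace X] {a : X → 𝔸} (ha : Continuous a) {c : ℝ} (hc : 0 < c)
    (hspec : ∀ x, spectralRadius ℂ (exp (a x)) < ENNReal.ofReal c) :
    ∃ C, ∀ x, ∀ t : ℝ, 0 ≤ t → ‖exp (t • a x)‖ ≤ C * c ^ t := by
  set U : ℕ → Set X := fun n => {x | ‖exp (((n : ℝ) + 1) • a x)‖ < c ^ ((n : ℝ) + 1)}
  have hU : ∀ n, IsOpen (U n) := fun n =>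
    isOpen_lt (exp_continuous.comp (ha.const_smul _)).norm continuous_const
  have hcover : ∀ x, ∃ n, x ∈ U n := fun x => by
    obtain ⟨n, hn⟩ := (eventually_norm_pow_lt_of_spectralRadius_lt (hspec x)).exists_forall_of_atTop
    have h := hn (n + 1) n.le_succ
    rw [← exp_nsmul, ← Nat.cast_smul_eq_nsmul ℝ, ← Real.rpow_natCast] at h
    exact ⟨n, by simpa [U] using h⟩
  obtain ⟨N, hN⟩ := CompactSpace.exists_forall_exists_le_mem hU hcover
  obtain ⟨C, hC⟩ := (isCompact_Icc.prod isCompact_univ).exists_bound_of_continuousOn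
    (f := fun p : ℝ × X => ‖exp (p.1 • a p.2)‖ / c ^ p.1) <|
    ((exp_continuous.comp (continuous_fst.smul (ha.comp continuous_snd))).norm.div
      (continuous_const.rpow continuous_fst fun _ => Or.inl hc.ne') fun _ => by positivity
      ).continuousOn
  have hwindow : ∀ x, ∀ s ∈ Icc (0 : ℝ) (N + 1), ‖exp (s • a x)‖ ≤ C * c ^ s := by
    intro x s hs
    have := (le_abs_self _).trans (hC (s, x) ⟨hs, mem_univ x⟩)
    rwa [div_le_iff₀ (by positivity)] at this
  refine ⟨C, fun x t ht => ?_⟩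
  obtain ⟨n, hnN, hxn⟩ := hN x
  refine norm_exp_smul_le_mul_rpow hc (by positivity) hxn.le (fun s hs => hwindow x s ?_) ht
  exact ⟨hs.1, hs.2.trans (by exact_mod_cast Nat.add_le_add_right hnN 1)⟩

end BanachAlgebra

theorem norm_exp_uniform_bound_of_spectralRadius_le_general {Υ : Type*} [MetricSpace Υ]
    [CompactSpace Υ] {m : ℕ} (A : Υ → Matrix (Fin m) (Fin m) ℂ) (hA : Continuous A)
    (δ : ℝ)
    (hspec : ∀ v, spectralRadius ℂ (exp (A v)) ≤ ENNReal.ofReal (Real.exp (-δ / 2))) :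
    ∃ T : ℝ, 0 < T ∧ ∀ v : Υ, ∀ t : ℝ, T ≤ t →
      ‖exp (t • A v)‖ ≤ (2 * Real.exp (-δ / 2)) ^ t := by
  set r := Real.exp (-δ / 2)
  have hr : 0 < r := Real.exp_pos _
  obtain ⟨C, hC⟩ := exists_forall_norm_exp_smul_le_mul_rpow hA (c := 3 / 2 * r) (by positivity)
    fun v => (hspec v).trans_lt ((ENNReal.ofReal_lt_ofReal_iff (by positivity)).mpr (by linarith))
  obtain ⟨T, hT⟩ := ((eventually_mul_rpow_le_rpow (by positivity) (by linarith : 3 / 2 * r < 2 * r)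
    C).and (eventually_gt_atTop 0)).exists_forall_of_atTop
  exact ⟨T, (hT T le_rfl).2, fun v t ht => (hC v t (hT t ht).2.le).trans (hT t ht).1⟩

/-- For a continuous family `A(v)` of matrices over a compact metric space `Υ`
with `r_spec (exp (A v)) ≤ exp (-δ/2)` for all `v`, there is a uniform `T > 0` such that
`‖exp (t • A v)‖ ≤ (2 exp (-δ/2)) ^ t` for all `v ∈ Υ` and all `t ≥ T`. -/
theorem norm_exp_uniform_bound_of_spectralRadius_le {Υ : Type*} [MetricSpace Υ]
    [CompactSpace Υ] {m : ℕ} (A : Υ → Matrix (Fin m) (Fin m) ℂ) (hA : Continuous A)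
    (δ : ℝ) (hδ : 0 < δ)
    (hspec : ∀ v, spectralRadius ℂ (exp (A v)) ≤ ENNReal.ofReal (Real.exp (-δ / 2))) :
    ∃ T : ℝ, 0 < T ∧ ∀ v : Υ, ∀ t : ℝ, T ≤ t →
      ‖exp (t • A v)‖ ≤ (2 * Real.exp (-δ / 2)) ^ t :=
  norm_exp_uniform_bound_of_spectralRadius_le_general A hA δ hspec
end

section
/- Let Υ be a compact metric space, let S⁺, S⁻ : Υ → ℂ^{m×m} be continuous matrix families, and suppose there exist δ > 0 and continuous functions α : Υ → ℂ with |α(v)| = 1 and β : Υ → ℝ such that for every v ∈ Υ every eigenvalue λ of S⁺(v) satisfies Re(α(v)λ) > β(v) + δ/2 and every eigenvalue μ of S⁻(v) satisfies Re(α(v)μ) < β(v) − δ/2. Then there exists a constant C > 0 such that for every v ∈ Υ and every B ∈ ℂ^{m×m} there is a matrix X ∈ ℂ^{m×m} with S⁺(v)·X − X·S⁻(v) = B and ‖X‖ ≤ C‖B‖. -/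
/-!
If `q` is the characteristic polynomial of `S⁻(v)`, then `S⁺(v) X = X S⁻(v)` gives
`q(S⁺(v)) X = X q(S⁻(v)) = 0`, and `q(S⁺(v))` is invertible because the spectra are disjoint; so
the Sylvester operator `X ↦ S⁺(v) X - X S⁻(v)` is injective, hence invertible. It depends
continuously on `v`, inversion is continuous on the units of a Banach algebra, and a continuous
function on a compact space is bounded, which gives a uniform bound on the norm of its inverse.
-/

attribute [local instance] Matrix.linftyOpNormedRing Matrix.linftyOpNormedAlgebra
  Matrix.linftyOpNormedSpace

open Polynomial

theorem SemiconjBy.aeval {R A : Type*} [CommSemiring R] [Semiring A] [Algebra R A] {x a b : A}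
    (h : SemiconjBy x a b) (p : R[X]) : SemiconjBy x (aeval a p) (aeval b p) := by
  induction p using Polynomial.induction_on' with
  | add p q hp hq => simpa only [map_add] using hp.add_right hq
  | monomial n c =>
    simpa only [aeval_monomial] using
      SemiconjBy.mul_right (Algebra.commute_algebraMap_right c x) (h.pow_right n)

namespace Matrix

variable {K n : Type*} [Field K] [IsAlgClosed K] [Fintype n] [DecidableEq n]
  {A B : Matrix n n K}

theorem isUnit_aeval_charpoly_of_disjoint_spectrum (h : Disjoint (spectrum K A) (spectrum K B)) :
    IsUnit (aeval A B.charpoly) := by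
  cases isEmpty_or_nonempty n
  · exact isUnit_of_subsingleton _
  have hdeg : 0 < B.charpoly.degree := by
    rw [charpoly_degree_eq_dim]
    exact_mod_cast Fintype.card_pos
  rw [← spectrum.zero_notMem_iff K, spectrum.map_polynomial_aeval_of_degree_pos A _ hdeg]
  rintro ⟨μ, hμA, hμB⟩
  exact Set.disjoint_left.1 h hμA (mem_spectrum_iff_isRoot_charpoly.2 hμB)

theorem eq_zero_of_mul_eq_mul_of_disjoint_spectrum (h : Disjoint (spectrum K A) (spectrum K B))
    {X : Matrix n n K} (hX : A * X = X * B) : X = 0 := by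
  have hq : aeval A B.charpoly * X = 0 := by
    rw [← (SemiconjBy.aeval hX.symm B.charpoly).eq, aeval_self_charpoly, mul_zero]
  exact (isUnit_aeval_charpoly_of_disjoint_spectrum h).mul_right_eq_zero.1 hq

end Matrix

theorem ContinuousLinearMap.isUnit_of_injective {𝕜 E : Type*} [NontriviallyNormedField 𝕜]
    [CompleteSpace 𝕜] [NormedAddCommGroup E] [NormedSpace 𝕜 E] [FiniteDimensional 𝕜 E]
    {f : E →L[𝕜] E} (hf : Function.Injective f) : IsUnit f := by
  have := FiniteDimensional.complete 𝕜 E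
  exact isUnit_iff_isUnit_toLinearMap.2
    ((LinearMap.isUnit_iff_ker_eq_bot _).2 (LinearMap.ker_eq_bot.2 hf))

theorem Continuous.exists_forall_norm_ring_inverse_le {R Υ : Type*} [NormedRing R]
    [HasSummableGeomSeries R] [TopologicalSpace Υ] [CompactSpace Υ] {T : Υ → R}
    (hT : Continuous T) (hunit : ∀ v, IsUnit (T v)) : ∃ C, ∀ v, ‖Ring.inverse (T v)‖ ≤ C := by
  have hinv : Continuous fun v => Ring.inverse (T v) :=
    continuous_iff_continuousAt.2 fun v =>
      ((hunit v).unit_spec ▸ NormedRing.inverse_continuousAt (hunit v).unit).comp hT.continuousAt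
  obtain ⟨C, hC⟩ := (isCompact_range hinv.norm).bddAbove
  exact ⟨C, fun v => hC ⟨v, rfl⟩⟩

theorem ContinuousLinearMap.exists_uniformly_bounded_solution {𝕜 E Υ : Type*}
    [NontriviallyNormedField 𝕜] [NormedAddCommGroup E] [NormedSpace 𝕜 E] [CompleteSpace E]
    [TopologicalSpace Υ] [CompactSpace Υ] {T : Υ → E →L[𝕜] E} (hT : Continuous T)
    (hunit : ∀ v, IsUnit (T v)) :
    ∃ C, 0 < C ∧ ∀ v y, ∃ x, T v x = y ∧ ‖x‖ ≤ C * ‖y‖ := by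
  obtain ⟨C, hC⟩ := hT.exists_forall_norm_ring_inverse_le hunit
  refine ⟨max C 1, by positivity, fun v y => ⟨Ring.inverse (T v) y, ?_, ?_⟩⟩
  · exact DFunLike.congr_fun (Ring.mul_inverse_cancel _ (hunit v)) y
  · calc ‖Ring.inverse (T v) y‖ ≤ ‖Ring.inverse (T v)‖ * ‖y‖ := le_opNorm _ y
      _ ≤ max C 1 * ‖y‖ := by gcongr; exact (hC v).trans (le_max_left C 1)

section Sylvester

variable (𝕜 : Type*) {A : Type*} [NontriviallyNormedField 𝕜] [NormedRing A] [NormedAlgebra 𝕜 A]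

noncomputable def sylvesterOp (a b : A) : A →L[𝕜] A :=
  ContinuousLinearMap.mul 𝕜 A a - (ContinuousLinearMap.mul 𝕜 A).flip b

variable {𝕜}

@[simp]
theorem sylvesterOp_apply (a b X : A) : sylvesterOp 𝕜 a b X = a * X - X * b := rfl

theorem Continuous.sylvesterOp {Υ : Type*} [TopologicalSpace Υ] {a b : Υ → A}
    (ha : Continuous a) (hb : Continuous b) : Continuous fun v => sylvesterOp 𝕜 (a v) (b v) :=
  ((ContinuousLinearMap.mul 𝕜 A).continuous.comp ha).sub
    ((ContinuousLinearMap.mul 𝕜 A).flip.continuous.comp hb)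

end Sylvester

theorem Matrix.isUnit_sylvesterOp {𝕜 n : Type*} [NontriviallyNormedField 𝕜] [CompleteSpace 𝕜]
    [IsAlgClosed 𝕜] [Fintype n] [DecidableEq n] {A B : Matrix n n 𝕜}
    (h : Disjoint (spectrum 𝕜 A) (spectrum 𝕜 B)) : IsUnit (sylvesterOp 𝕜 A B) := by
  refine ContinuousLinearMap.isUnit_of_injective ((injective_iff_map_eq_zero _).2 fun X hX => ?_)
  exact eq_zero_of_mul_eq_mul_of_disjoint_spectrum h (sub_eq_zero.1 hX)

theorem sylvester_uniform_bound_general {Υ : Type*} [MetricSpace Υ] [CompactSpace Υ] {m : ℕ}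
    (Sp Sm : Υ → Matrix (Fin m) (Fin m) ℂ) (hSp : Continuous Sp) (hSm : Continuous Sm)
    (δ : ℝ) (hδ : 0 < δ) (α : Υ → ℂ) (β : Υ → ℝ)
    (hspecp : ∀ v, ∀ lam ∈ spectrum ℂ (Sp v), β v + δ / 2 < (α v * lam).re)
    (hspecm : ∀ v, ∀ mu ∈ spectrum ℂ (Sm v), (α v * mu).re < β v - δ / 2) :
    ∃ C : ℝ, 0 < C ∧ ∀ v : Υ, ∀ B : Matrix (Fin m) (Fin m) ℂ,
      ∃ X : Matrix (Fin m) (Fin m) ℂ, Sp v * X - X * Sm v = B ∧ ‖X‖ ≤ C * ‖B‖ := by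
  have hdisj : ∀ v, Disjoint (spectrum ℂ (Sp v)) (spectrum ℂ (Sm v)) := fun v =>
    Set.disjoint_left.2 fun μ hp hm => by linarith [hspecp v μ hp, hspecm v μ hm]
  simpa only [sylvesterOp_apply] using ContinuousLinearMap.exists_uniformly_bounded_solution
    (hSp.sylvesterOp (𝕜 := ℂ) hSm) fun v => Matrix.isUnit_sylvesterOp (hdisj v)

/-- uniform solvability of the Sylvester equation, Corollary 3 of the paper.
If the spectra of two continuous families `Sp v`, `Sm v` over a compact metric space are
uniformly separated by a closed strip of width `δ` around the line `{ζ : Re (α v · ζ) = β v}`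
(with `α, β` continuous, `|α v| = 1`), then there is a uniform constant `C > 0` such that for
every `v` and every right-hand side `B` the Sylvester equation `Sp v · X - X · Sm v = B` has a
solution `X` with `‖X‖ ≤ C ‖B‖`. -/
theorem sylvester_uniform_bound {Υ : Type*} [MetricSpace Υ] [CompactSpace Υ] {m : ℕ}
    (Sp Sm : Υ → Matrix (Fin m) (Fin m) ℂ) (hSp : Continuous Sp) (hSm : Continuous Sm)
    (δ : ℝ) (hδ : 0 < δ) (α : Υ → ℂ) (β : Υ → ℝ) (hα : Continuous α) (hβ : Continuous β)
    (hα1 : ∀ v, ‖α v‖ = 1)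
    (hspecp : ∀ v, ∀ lam ∈ spectrum ℂ (Sp v), β v + δ / 2 < (α v * lam).re)
    (hspecm : ∀ v, ∀ mu ∈ spectrum ℂ (Sm v), (α v * mu).re < β v - δ / 2) :
    ∃ C : ℝ, 0 < C ∧ ∀ v : Υ, ∀ B : Matrix (Fin m) (Fin m) ℂ,
      ∃ X : Matrix (Fin m) (Fin m) ℂ, Sp v * X - X * Sm v = B ∧ ‖X‖ ≤ C * ‖B‖ :=
  sylvester_uniform_bound_general Sp Sm hSp hSm δ hδ α β hspecp hspecm
end

section
/- Let Υ be a compact metric space and let d ≥ 1 with block sizes m₁, …, m_d summing to m. Let A : ℝ × Υ → ℂ^{m×m} be a family with continuous, uniformly bounded coefficient functions A_k : Υ → ℂ^{m×m} (k ∈ ℕ) such that for every N ∈ ℕ there are C, ε > 0 with ‖A(ρ,v) − Σ_{k=0}^{N−1} ρ^k A_k(v)‖ ≤ C|ρ|^N for all v ∈ Υ and |ρ| ≤ ε (uniform full asymptotic expansion). Suppose A₀(v) is block-diagonal, A₀(v) = bdiag(S₁(v), …, S_d(v)) with continuous families S_j : Υ → ℂ^{m_j×m_j}, and that there is δ > 0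 such that for every pair i ≠ j there exist continuous α_{ij} : Υ → ℂ with |α_{ij}(v)| = 1 and β_{ij} : Υ → ℝ with Re(α_{ij}(v)λ) > β_{ij}(v) + δ/2 for all eigenvalues λ of S_i(v) and Re(α_{ij}(v)μ) < β_{ij}(v) − δ/2 for all eigenvalues μ of S_j(v). Then for every N ∈ ℕ there exist uniformly bounded functions M₀, …, M_{N−1} : Υ → ℂ^{m×m} with M₀(v) = I, and uniformly bounded functions Λ₀, …, Λ_{N−1} : Υ → ℂ^{m×m} each of which is block-diagonal with respect to the blocks m₁, …, m_d, together with constants C', ε' > 0 such that ‖A(ρ,v)·(Σ_{k=0}^{N−1} ρ^k M_k(v)) − (Σ_{k=0}^{N−1} ρ^k M_k(v))·(Σ_{k=0}^{N−1} ρ^k Λ_k(v))‖ ≤ C'|ρ|^N for all v ∈ Υ and |ρ| ≤ ε'. -/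
attribute [local instance] Matrix.linftyOpNormedRing Matrix.linftyOpNormedAlgebra
  Matrix.linftyOpNormedSpace

/-!
Look for `M(ρ) = ∑ ρ^k M_k` and `Λ(ρ) = ∑ ρ^k Λ_k` with `A M = M Λ` order by order. With
`M₀ = 1` and `Λ₀ = A₀`, the equation at order `k` reads `A₀ M_k - M_k A₀ - Λ_k = R_k`, where
`R_k` involves only lower orders. Take `Λ_k` block-diagonal and `M_k` off-block-diagonal: on the
block `(i, j)`, `i ≠ j`, this is the Sylvester equation `S_i X - X S_j = (R_k)_{ij}`, uniquely
solvable since `S_i` and `S_j` have disjoint spectra. The solution operator is continuous in `v`,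
so all coefficients are continuous, hence bounded on the compact space `Υ`, and the truncated
series satisfy `A M = M Λ` up to `O(|ρ|^N)`.
-/

open Polynomial Finset

namespace Matrix

section Sylvester

variable {m n : Type*} [Fintype m] [DecidableEq m] [Fintype n] [DecidableEq n]

theorem aeval_mul_eq_mul_aeval {R : Type*} [CommSemiring R] {P : Matrix m m R}
    {Q : Matrix n n R} {X : Matrix m n R} (h : P * X = X * Q) (p : R[X]) :
    aeval P p * X = X * aeval Q p := by
  have hpow : ∀ k : ℕ, P ^ k * X = X * Q ^ k := fun k => by
    induction k with
    | zero => simp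
    | succ k ih => rw [pow_succ, pow_succ, Matrix.mul_assoc, h, ← Matrix.mul_assoc, ih,
        Matrix.mul_assoc]
  induction p using Polynomial.induction_on' with
  | add p q hp hq => rw [map_add, map_add, Matrix.add_mul, Matrix.mul_add, hp, hq]
  | monomial k c => simp only [aeval_monomial, ← Algebra.smul_def, Matrix.smul_mul,
      Matrix.mul_smul, hpow]

theorem eq_zero_of_mul_eq_mul_of_disjoint_spectrum_s8 {K : Type*} [Field K] [IsAlgClosed K]
    {P : Matrix m m K} {Q : Matrix n n K} (hPQ : Disjoint (spectrum K P) (spectrum K Q))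
    {X : Matrix m n K} (h : P * X = X * Q) : X = 0 := by
  cases isEmpty_or_nonempty n
  · exact Subsingleton.elim _ _
  have hdeg : 0 < Q.charpoly.degree := by
    rw [charpoly_degree_eq_dim, Nat.cast_pos]
    exact Fintype.card_pos
  -- By spectral mapping, `χ_Q(P)` is invertible while it annihilates `X`.
  have hunit : IsUnit (aeval P Q.charpoly) := by
    rw [← spectrum.zero_notMem_iff K, spectrum.map_polynomial_aeval_of_degree_pos P _ hdeg]
    rintro ⟨μ, hμP, hμQ⟩
    exact Set.disjoint_left.1 hPQ hμP (mem_spectrum_iff_isRoot_charpoly.2 hμQ)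
  have hzero : aeval P Q.charpoly * X = 0 := by
    rw [aeval_mul_eq_mul_aeval h, aeval_self_charpoly, Matrix.mul_zero]
  have hdet := (isUnit_iff_isUnit_det _).1 hunit
  calc X = ((aeval P Q.charpoly)⁻¹ * aeval P Q.charpoly) * X := by
        rw [nonsing_inv_mul _ hdet, Matrix.one_mul]
    _ = 0 := by rw [Matrix.mul_assoc, hzero, Matrix.mul_zero]

end Sylvester

section BlockDiagonal

variable {ι : Type*} [Fintype ι] [DecidableEq ι] {n : ι → Type*} [∀ i, Fintype (n i)]
  {α : Type*} [NonUnitalNonAssocSemiring α]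

theorem submatrix_blockDiagonal'_mul (S : ∀ i, Matrix (n i) (n i) α)
    (X : Matrix (Σ i, n i) (Σ i, n i) α) (i j : ι) :
    (blockDiagonal' S * X).submatrix (Sigma.mk i) (Sigma.mk j)
      = S i * X.submatrix (Sigma.mk i) (Sigma.mk j) := by
  ext a b
  simp only [submatrix_apply, mul_apply, ← univ_sigma_univ, sum_sigma]
  rw [Fintype.sum_eq_single i fun k hk => sum_eq_zero fun c _ => by
    rw [blockDiagonal'_apply_ne _ _ _ hk.symm, zero_mul]]
  simp [blockDiagonal'_apply_eq]

theorem submatrix_mul_blockDiagonal' (S : ∀ i, Matrix (n i) (n i) α)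
    (X : Matrix (Σ i, n i) (Σ i, n i) α) (i j : ι) :
    (X * blockDiagonal' S).submatrix (Sigma.mk i) (Sigma.mk j)
      = X.submatrix (Sigma.mk i) (Sigma.mk j) * S j := by
  ext a b
  simp only [submatrix_apply, mul_apply, ← univ_sigma_univ, sum_sigma]
  rw [Fintype.sum_eq_single j fun k hk => sum_eq_zero fun c _ => by
    rw [blockDiagonal'_apply_ne _ _ _ hk, mul_zero]]
  simp [blockDiagonal'_apply_eq]

theorem blockDiag'_blockDiagonal'_mul (S : ∀ i, Matrix (n i) (n i) α)
    (X : Matrix (Σ i, n i) (Σ i, n i) α) :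
    blockDiag' (blockDiagonal' S * X) = S * blockDiag' X :=
  funext fun i => submatrix_blockDiagonal'_mul S X i i

theorem blockDiag'_mul_blockDiagonal' (S : ∀ i, Matrix (n i) (n i) α)
    (X : Matrix (Σ i, n i) (Σ i, n i) α) :
    blockDiag' (X * blockDiagonal' S) = blockDiag' X * S :=
  funext fun i => submatrix_mul_blockDiagonal' S X i i

variable {R : Type*} [CommRing R]

def blockDiagProj : Matrix (Σ i, n i) (Σ i, n i) R →ₗ[R] Matrix (Σ i, n i) (Σ i, n i) R where
  toFun X := blockDiagonal' (blockDiag' X)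
  map_add' X Y := by simp only [blockDiag'_add, blockDiagonal'_add]
  map_smul' c X := by simp only [blockDiag'_smul, blockDiagonal'_smul, RingHom.id_apply]

/-- The commutator with `D` on off-block-diagonal matrices and the identity on block-diagonal
ones. A solution of `homologicalMap D z = r` gives the solution `M = z - blockDiagProj z`,
`Λ = -blockDiagProj z` of `D M - M D - Λ = r`. -/
def homologicalMap (D : Matrix (Σ i, n i) (Σ i, n i) R) :
    Matrix (Σ i, n i) (Σ i, n i) R →ₗ[R] Matrix (Σ i, n i) (Σ i, n i) R :=
  (LinearMap.mulLeft R D - LinearMap.mulRight R D) ∘ₗ (LinearMap.id - blockDiagProj)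
    + blockDiagProj

theorem homologicalMap_apply (D X : Matrix (Σ i, n i) (Σ i, n i) R) :
    homologicalMap D X = D * (X - blockDiagonal' (blockDiag' X))
      - (X - blockDiagonal' (blockDiag' X)) * D + blockDiagonal' (blockDiag' X) := rfl

theorem blockDiag'_homologicalMap (S : ∀ i, Matrix (n i) (n i) R)
    (X : Matrix (Σ i, n i) (Σ i, n i) R) :
    blockDiag' (homologicalMap (blockDiagonal' S) X) = blockDiag' X := by
  simp [homologicalMap_apply, blockDiag'_blockDiagonal'_mul, blockDiag'_mul_blockDiagonal']

variable {K : Type*} [Field K] [IsAlgClosed K] [∀ i, DecidableEq (n i)]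

theorem blockDiagonal'_blockDiag'_of_mul_eq_mul {S : ∀ i, Matrix (n i) (n i) K}
    (hS : Pairwise fun i j => Disjoint (spectrum K (S i)) (spectrum K (S j)))
    {X : Matrix (Σ i, n i) (Σ i, n i) K} (h : blockDiagonal' S * X = X * blockDiagonal' S) :
    blockDiagonal' (blockDiag' X) = X := by
  ext ⟨i, a⟩ ⟨j, b⟩
  rcases eq_or_ne i j with rfl | hij
  · rw [blockDiagonal'_apply_eq, blockDiag'_apply]
  · have hblock : X.submatrix (Sigma.mk i) (Sigma.mk j) = 0 :=
      eq_zero_of_mul_eq_mul_of_disjoint_spectrum_s8 (hS hij) <| by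
        rw [← submatrix_blockDiagonal'_mul, h, submatrix_mul_blockDiagonal']
    rw [blockDiagonal'_apply_ne _ _ _ hij]
    exact (congrFun₂ hblock a b).symm

theorem homologicalMap_injective {S : ∀ i, Matrix (n i) (n i) K}
    (hS : Pairwise fun i j => Disjoint (spectrum K (S i)) (spectrum K (S j))) :
    Function.Injective (homologicalMap (blockDiagonal' S)) := by
  refine (injective_iff_map_eq_zero _).2 fun X hX => ?_
  have hdiag : blockDiag' X = 0 := by rw [← blockDiag'_homologicalMap S X, hX, blockDiag'_zero]
  rw [homologicalMap_apply, hdiag, blockDiagonal'_zero, sub_zero, add_zero, sub_eq_zero] at hX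
  rw [← blockDiagonal'_blockDiag'_of_mul_eq_mul hS hX, hdiag, blockDiagonal'_zero]

end BlockDiagonal

end Matrix

open Matrix

section HomologicalSeries

variable {R : Type*} [Ring R] (a : ℕ → R) (sol : R → R × R)

/-- The pairs `(M k, Λ k)`, where `sol r = (M, Λ)` is meant to solve `a 0 * M - M * a 0 - Λ = r`
and the argument of `sol` at order `n + 1` gathers the terms of order `n + 1` of
`(∑ ρ^k a k) (∑ ρ^k M k) - (∑ ρ^k M k) (∑ ρ^k Λ k)` that involve only lower orders. -/
def homologicalSeries : ℕ → R × R
  | 0 => (1, a 0)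
  | n + 1 => sol (∑ i : Fin n, (homologicalSeries ((i : ℕ) + 1)).1 * (homologicalSeries (n - i)).2
      - ∑ i : Fin (n + 1), a ((i : ℕ) + 1) * (homologicalSeries (n - i)).1)

theorem homologicalSeries_zero : homologicalSeries a sol 0 = (1, a 0) := by
  rw [homologicalSeries]

theorem homologicalSeries_succ (n : ℕ) : homologicalSeries a sol (n + 1) =
    sol (∑ i ∈ range n, (homologicalSeries a sol (i + 1)).1 * (homologicalSeries a sol (n - i)).2
      - ∑ i ∈ range (n + 1), a (i + 1) * (homologicalSeries a sol (n - i)).1) := by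
  rw [homologicalSeries,
    Fin.sum_univ_eq_sum_range fun i => (homologicalSeries a sol (i + 1)).1
      * (homologicalSeries a sol (n - i)).2,
    Fin.sum_univ_eq_sum_range fun i => a (i + 1) * (homologicalSeries a sol (n - i)).1]

theorem homologicalSeries_sum_mul_eq
    (hsol : ∀ r, a 0 * (sol r).1 - (sol r).1 * a 0 - (sol r).2 = r) (n : ℕ) :
    ∑ i ∈ range (n + 1), a i * (homologicalSeries a sol (n - i)).1
      = ∑ i ∈ range (n + 1),
          (homologicalSeries a sol i).1 * (homologicalSeries a sol (n - i)).2 := by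
  cases n with
  | zero => simp [homologicalSeries_zero]
  | succ n =>
    have h := hsol (∑ i ∈ range n,
        (homologicalSeries a sol (i + 1)).1 * (homologicalSeries a sol (n - i)).2
      - ∑ i ∈ range (n + 1), a (i + 1) * (homologicalSeries a sol (n - i)).1)
    rw [← homologicalSeries_succ a sol n] at h
    conv_lhs => rw [sum_range_succ']
    conv_rhs => rw [sum_range_succ', sum_range_succ]
    simp only [Nat.add_sub_add_right, Nat.sub_zero, Nat.sub_self, homologicalSeries_zero,
      one_mul]
    linear_combination (norm := abel) h

theorem homologicalSeries_snd_mem {s : Set R} (h₀ : a 0 ∈ s) (hsol : ∀ r, (sol r).2 ∈ s)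
    (n : ℕ) : (homologicalSeries a sol n).2 ∈ s := by
  cases n with
  | zero => rwa [homologicalSeries_zero]
  | succ n =>
    rw [homologicalSeries_succ]
    exact hsol _

end HomologicalSeries

theorem ContinuousLinearMap.exists_continuous_apply_eq {𝕜 E X : Type*}
    [NontriviallyNormedField 𝕜] [NormedAddCommGroup E] [NormedSpace 𝕜 E] [CompleteSpace E]
    [TopologicalSpace X] {T : X → E →L[𝕜] E} (hT : Continuous T) (hunit : ∀ x, IsUnit (T x))
    {y : X → E} (hy : Continuous y) : ∃ z : X → E, Continuous z ∧ ∀ x, T x (z x) = y x := by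
  refine ⟨fun x => (↑(hunit x).unit⁻¹ : E →L[𝕜] E) (y x), ?_, fun x => ?_⟩
  · exact (Units.continuous_coe_inv.comp
      (ContinuousMap.continuous_isUnit_unit (f := ⟨T, hT⟩) hunit)).clm_apply hy
  · change (↑(hunit x).unit * ↑(hunit x).unit⁻¹ : E →L[𝕜] E) (y x) = y x
    rw [Units.mul_inv]
    rfl

section ContinuousFamilies

variable {Υ ι : Type*} [TopologicalSpace Υ] [Fintype ι] [DecidableEq ι] {n : ι → Type*}
  [∀ i, Fintype (n i)] [∀ i, DecidableEq (n i)]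

theorem exists_homological_solution (a₀ : C(Υ, Matrix (Σ i, n i) (Σ i, n i) ℂ))
    (S : ∀ i, Υ → Matrix (n i) (n i) ℂ)
    (ha₀ : ∀ v, a₀ v = blockDiagonal' fun i => S i v)
    (hS : ∀ v, Pairwise fun i j => Disjoint (spectrum ℂ (S i v)) (spectrum ℂ (S j v)))
    (r : C(Υ, Matrix (Σ i, n i) (Σ i, n i) ℂ)) :
    ∃ p : C(Υ, Matrix (Σ i, n i) (Σ i, n i) ℂ) × C(Υ, Matrix (Σ i, n i) (Σ i, n i) ℂ),
      a₀ * p.1 - p.1 * a₀ - p.2 = r ∧ ∀ v, p.2 v ∈ Set.range blockDiagonal' := by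
  set T := fun v => LinearMap.toContinuousLinearMap (homologicalMap (a₀ v))
  have hT : Continuous T := continuous_clm_apply.2 fun X => by
    change Continuous fun v => homologicalMap (a₀ v) X
    simp only [homologicalMap_apply]
    fun_prop
  have hunit : ∀ v, IsUnit (T v) := fun v => by
    have hinj : Function.Injective (homologicalMap (a₀ v)) :=
      ha₀ v ▸ homologicalMap_injective (hS v)
    exact ContinuousLinearMap.isUnit_iff_bijective.2
      ⟨hinj, LinearMap.injective_iff_surjective.1 hinj⟩
  obtain ⟨z, hz, hTz⟩ := ContinuousLinearMap.exists_continuous_apply_eq hT hunit r.continuous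
  have hdiag : Continuous fun v => blockDiagonal' (blockDiag' (z v)) :=
    hz.matrix_blockDiag'.matrix_blockDiagonal'
  refine ⟨(⟨fun v => z v - blockDiagonal' (blockDiag' (z v)), hz.sub hdiag⟩,
    -⟨fun v => blockDiagonal' (blockDiag' (z v)), hdiag⟩), ?_, fun v => ?_⟩
  · ext1 v
    exact (sub_neg_eq_add _ _).trans (hTz v)
  · exact ⟨-blockDiag' (z v), by simp⟩

theorem exists_formal_blockDiagonalization (a : ℕ → C(Υ, Matrix (Σ i, n i) (Σ i, n i) ℂ))
    (S : ∀ i, Υ → Matrix (n i) (n i) ℂ)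
    (ha₀ : ∀ v, a 0 v = blockDiagonal' fun i => S i v)
    (hS : ∀ v, Pairwise fun i j => Disjoint (spectrum ℂ (S i v)) (spectrum ℂ (S j v))) :
    ∃ M Λ : ℕ → C(Υ, Matrix (Σ i, n i) (Σ i, n i) ℂ), M 0 = 1 ∧
      (∀ k v, Λ k v ∈ Set.range blockDiagonal') ∧
      ∀ s, ∑ i ∈ range (s + 1), a i * M (s - i) = ∑ i ∈ range (s + 1), M i * Λ (s - i) := by
  choose sol hsol hsolΛ using exists_homological_solution (a 0) S ha₀ hS
  refine ⟨fun k => (homologicalSeries a sol k).1, fun k => (homologicalSeries a sol k).2,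
    congrArg Prod.fst (homologicalSeries_zero a sol), fun k => ?_,
    homologicalSeries_sum_mul_eq a sol hsol⟩
  exact homologicalSeries_snd_mem a sol (s := {Λ | ∀ v, Λ v ∈ Set.range blockDiagonal'})
    (fun v => ⟨_, (ha₀ v).symm⟩) hsolΛ k

end ContinuousFamilies

section TruncatedProducts

variable {𝕜 E : Type*} [NormedField 𝕜]

theorem norm_sum_pow_smul_le [SeminormedAddCommGroup E] [NormedSpace 𝕜 E] (f : ℕ → E)
    {ρ : 𝕜} (hρ : ‖ρ‖ ≤ 1) (N : ℕ) :
    ‖∑ k ∈ range N, ρ ^ k • f k‖ ≤ ∑ k ∈ range N, ‖f k‖ :=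
  (norm_sum_le _ _).trans <| sum_le_sum fun k _ => by
    rw [norm_smul, norm_pow]
    exact mul_le_of_le_one_left (norm_nonneg _) (pow_le_one₀ (norm_nonneg _) hρ)

variable [NormedRing E] [NormedAlgebra 𝕜 E]

theorem norm_sum_mul_sum_sub_sum_le (f g : ℕ → E) {ρ : 𝕜} (hρ : ‖ρ‖ ≤ 1) (N : ℕ) :
    ‖(∑ i ∈ range N, ρ ^ i • f i) * (∑ j ∈ range N, ρ ^ j • g j)
        - ∑ s ∈ range N, ρ ^ s • ∑ i ∈ range (s + 1), f i * g (s - i)‖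
      ≤ ‖ρ‖ ^ N * ((∑ i ∈ range N, ‖f i‖) * ∑ j ∈ range N, ‖g j‖) := by
  set F : ℕ → ℕ → E := fun i j => ρ ^ (i + j) • (f i * g j)
  have hprod : (∑ i ∈ range N, ρ ^ i • f i) * (∑ j ∈ range N, ρ ^ j • g j)
      = ∑ i ∈ range N, ∑ j ∈ range N, F i j := by
    simp only [F, sum_mul_sum, smul_mul_smul_comm, pow_add]
  have htriangle : ∑ s ∈ range N, ρ ^ s • ∑ i ∈ range (s + 1), f i * g (s - i)
      = ∑ i ∈ range N, ∑ j ∈ range (N - i), F i j := by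
    rw [← sum_range_diag_flip]
    refine sum_congr rfl fun s _ => ?_
    rw [smul_sum]
    refine sum_congr rfl fun i hi => ?_
    simp only [F, Nat.add_sub_cancel' (Nat.lt_succ_iff.1 (mem_range.1 hi))]
  have hdiff : ∑ i ∈ range N, ∑ j ∈ range N, F i j - ∑ i ∈ range N, ∑ j ∈ range (N - i), F i j
      = ∑ i ∈ range N, ∑ j ∈ Ico (N - i) N, F i j := by
    rw [← sum_sub_distrib]
    exact sum_congr rfl fun i _ => (sum_Ico_eq_sub _ (Nat.sub_le N i)).symm
  have hterm : ∀ i j, N ≤ i + j → ‖F i j‖ ≤ ‖ρ‖ ^ N * (‖f i‖ * ‖g j‖) := fun i j hij => by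
    rw [norm_smul, norm_pow]
    exact mul_le_mul (pow_le_pow_of_le_one (norm_nonneg _) hρ hij) (norm_mul_le _ _)
      (norm_nonneg _) (by positivity)
  rw [hprod, htriangle, hdiff, sum_mul_sum, mul_sum]
  refine (norm_sum_le _ _).trans <| sum_le_sum fun i hi => (norm_sum_le _ _).trans ?_
  rw [mul_sum]
  refine (sum_le_sum fun j hj => hterm i j ?_).trans <|
    sum_le_sum_of_subset_of_nonneg (fun j hj => mem_range.2 (mem_Ico.1 hj).2)
      fun j _ _ => by positivity
  have := (mem_Ico.1 hj).1
  omega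

theorem norm_mul_sum_sub_sum_mul_sum_le (a M Λ : ℕ → E) (N : ℕ)
    (hconv : ∀ s < N, ∑ i ∈ range (s + 1), a i * M (s - i)
      = ∑ i ∈ range (s + 1), M i * Λ (s - i)) (X : E) {ρ : 𝕜} (hρ : ‖ρ‖ ≤ 1) :
    ‖X * (∑ k ∈ range N, ρ ^ k • M k)
        - (∑ k ∈ range N, ρ ^ k • M k) * (∑ k ∈ range N, ρ ^ k • Λ k)‖
      ≤ ‖X - ∑ k ∈ range N, ρ ^ k • a k‖ * ∑ k ∈ range N, ‖M k‖
        + ‖ρ‖ ^ N * ((∑ k ∈ range N, ‖a k‖ + ∑ k ∈ range N, ‖Λ k‖) * ∑ k ∈ range N, ‖M k‖) := by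
  set P := ∑ k ∈ range N, ρ ^ k • M k
  set T := ∑ k ∈ range N, ρ ^ k • a k
  set Q := ∑ k ∈ range N, ρ ^ k • Λ k
  have hsame : ∑ s ∈ range N, ρ ^ s • ∑ i ∈ range (s + 1), a i * M (s - i)
      = ∑ s ∈ range N, ρ ^ s • ∑ i ∈ range (s + 1), M i * Λ (s - i) :=
    sum_congr rfl fun s hs => by rw [hconv s (mem_range.1 hs)]
  have hsplit : X * P - P * Q = (X - T) * P
      + ((T * P - ∑ s ∈ range N, ρ ^ s • ∑ i ∈ range (s + 1), a i * M (s - i))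
        - (P * Q - ∑ s ∈ range N, ρ ^ s • ∑ i ∈ range (s + 1), M i * Λ (s - i))) := by
    rw [hsame, sub_mul]
    abel
  rw [hsplit]
  refine (norm_add_le _ _).trans
    (add_le_add ((norm_mul_le _ _).trans ?_) ((norm_sub_le _ _).trans ?_))
  · exact mul_le_mul_of_nonneg_left (norm_sum_pow_smul_le M hρ N) (norm_nonneg _)
  · refine (add_le_add (norm_sum_mul_sum_sub_sum_le a M hρ N)
      (norm_sum_mul_sum_sub_sum_le M Λ hρ N)).trans_eq ?_
    ring

end TruncatedProducts

theorem exists_sum_norm_le {X E : Type*} [TopologicalSpace X] [CompactSpace X]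
    [SeminormedAddCommGroup E] {f : ℕ → X → E} (hf : ∀ k, Continuous (f k)) (N : ℕ) :
    ∃ c, 0 ≤ c ∧ ∀ x, ∑ k ∈ range N, ‖f k x‖ ≤ c := by
  obtain ⟨c, hc⟩ := (isCompact_range (continuous_finsetSum (range N) fun k _ =>
    (hf k).norm)).bddAbove
  exact ⟨max c 0, le_max_right _ _, fun x => (hc ⟨x, rfl⟩).trans (le_max_left _ _)⟩

theorem exists_forall_norm_mul_sum_sub_sum_mul_sum_le {𝕜 X E : Type*} [RCLike 𝕜]
    [TopologicalSpace X] [CompactSpace X] [NormedRing E] [NormedAlgebra 𝕜 E]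
    (A : ℝ → X → E) {a M Λ : ℕ → X → E} (ha : ∀ k, Continuous (a k))
    (hM : ∀ k, Continuous (M k)) (hΛ : ∀ k, Continuous (Λ k))
    (hconv : ∀ s x, ∑ i ∈ range (s + 1), a i x * M (s - i) x
      = ∑ i ∈ range (s + 1), M i x * Λ (s - i) x) {N : ℕ}
    (hA : ∃ C ε : ℝ, 0 < C ∧ 0 < ε ∧ ∀ x, ∀ ρ : ℝ, |ρ| ≤ ε →
      ‖A ρ x - ∑ k ∈ range N, (ρ : 𝕜) ^ k • a k x‖ ≤ C * |ρ| ^ N) :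
    ∃ C' ε' : ℝ, 0 < C' ∧ 0 < ε' ∧ ∀ x, ∀ ρ : ℝ, |ρ| ≤ ε' →
      ‖A ρ x * (∑ k ∈ range N, (ρ : 𝕜) ^ k • M k x)
          - (∑ k ∈ range N, (ρ : 𝕜) ^ k • M k x) * (∑ k ∈ range N, (ρ : 𝕜) ^ k • Λ k x)‖
        ≤ C' * |ρ| ^ N := by
  obtain ⟨C, ε, hC, hε, hA⟩ := hA
  obtain ⟨cA, hcA₀, hcA⟩ := exists_sum_norm_le ha N
  obtain ⟨cM, hcM₀, hcM⟩ := exists_sum_norm_le hM N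
  obtain ⟨cΛ, hcΛ₀, hcΛ⟩ := exists_sum_norm_le hΛ N
  refine ⟨C * cM + (cA + cΛ) * cM + 1, min ε 1, by positivity, by positivity, fun x ρ hρ => ?_⟩
  have hρ1 : ‖(ρ : 𝕜)‖ ≤ 1 := by
    rw [RCLike.norm_ofReal]
    exact hρ.trans (min_le_right _ _)
  calc _ ≤ ‖A ρ x - ∑ k ∈ range N, (ρ : 𝕜) ^ k • a k x‖ * ∑ k ∈ range N, ‖M k x‖
        + ‖(ρ : 𝕜)‖ ^ N * ((∑ k ∈ range N, ‖a k x‖ + ∑ k ∈ range N, ‖Λ k x‖)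
          * ∑ k ∈ range N, ‖M k x‖) :=
        norm_mul_sum_sub_sum_mul_sum_le (fun k => a k x) (fun k => M k x) (fun k => Λ k x) N
          (fun s _ => hconv s x) _ hρ1
    _ ≤ C * |ρ| ^ N * cM + |ρ| ^ N * ((cA + cΛ) * cM) := by
        rw [RCLike.norm_ofReal]
        gcongr
        exacts [hA x ρ (hρ.trans (min_le_left _ _)), hcM x, hcA x, hcΛ x, hcM x]
    _ ≤ (C * cM + (cA + cΛ) * cM + 1) * |ρ| ^ N := by
        nlinarith [pow_nonneg (abs_nonneg ρ) N]

theorem uniform_block_diagonalisation_general {Υ : Type*} [MetricSpace Υ] [CompactSpace Υ]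
    {d : ℕ} (mk : Fin d → ℕ)
    (A : ℝ → Υ → Matrix ((j : Fin d) × Fin (mk j)) ((j : Fin d) × Fin (mk j)) ℂ)
    (Ak : ℕ → Υ → Matrix ((j : Fin d) × Fin (mk j)) ((j : Fin d) × Fin (mk j)) ℂ)
    (hAkcont : ∀ k, Continuous (Ak k))
    (hexp : ∀ N : ℕ, ∃ C ε : ℝ, 0 < C ∧ 0 < ε ∧ ∀ v : Υ, ∀ ρ : ℝ, |ρ| ≤ ε →
      ‖A ρ v - ∑ k ∈ Finset.range N, (ρ : ℂ) ^ k • Ak k v‖ ≤ C * |ρ| ^ N)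
    (S : (j : Fin d) → Υ → Matrix (Fin (mk j)) (Fin (mk j)) ℂ)
    (hA0 : ∀ v, Ak 0 v = Matrix.blockDiagonal' (fun j => S j v))
    (δ : ℝ) (hδ : 0 < δ)
    (hsep : ∀ i j : Fin d, i ≠ j →
      ∃ α : Υ → ℂ, ∃ β : Υ → ℝ, Continuous α ∧ Continuous β ∧ (∀ v, ‖α v‖ = 1) ∧
        (∀ v, ∀ lam ∈ spectrum ℂ (S i v), β v + δ / 2 < (α v * lam).re) ∧
        (∀ v, ∀ mu ∈ spectrum ℂ (S j v), (α v * mu).re < β v - δ / 2)) :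
    ∀ N : ℕ,
      ∃ M Λ : ℕ → Υ → Matrix ((j : Fin d) × Fin (mk j)) ((j : Fin d) × Fin (mk j)) ℂ,
        (∀ v, M 0 v = 1) ∧
        (∀ k < N, ∃ c : ℝ, ∀ v, ‖M k v‖ ≤ c) ∧
        (∀ k < N, ∃ c : ℝ, ∀ v, ‖Λ k v‖ ≤ c) ∧
        (∀ k < N, ∀ v, ∀ i i' : (j : Fin d) × Fin (mk j), i.1 ≠ i'.1 → Λ k v i i' = 0) ∧
        ∃ C' ε' : ℝ, 0 < C' ∧ 0 < ε' ∧ ∀ v : Υ, ∀ ρ : ℝ, |ρ| ≤ ε' →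
          ‖A ρ v * (∑ k ∈ Finset.range N, (ρ : ℂ) ^ k • M k v)
              - (∑ k ∈ Finset.range N, (ρ : ℂ) ^ k • M k v)
                * (∑ k ∈ Finset.range N, (ρ : ℂ) ^ k • Λ k v)‖ ≤ C' * |ρ| ^ N := by
  intro N
  have hdisj : ∀ v, Pairwise fun i j => Disjoint (spectrum ℂ (S i v)) (spectrum ℂ (S j v)) :=
    fun v i j hij => Set.disjoint_left.2 fun μ hi hj => by
      obtain ⟨α, β, -, -, -, hαi, hαj⟩ := hsep i j hij
      linarith [hαi v μ hi, hαj v μ hj]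
  obtain ⟨M, Λ, hM₀, hΛ, hconv⟩ :=
    exists_formal_blockDiagonalization (fun k => ⟨Ak k, hAkcont k⟩) S hA0 hdisj
  refine ⟨fun k => M k, fun k => Λ k, fun v => DFunLike.congr_fun hM₀ v,
    fun k _ => (isCompact_range (M k).continuous).isBounded.exists_norm_le.imp
      fun c hc v => hc _ ⟨v, rfl⟩,
    fun k _ => (isCompact_range (Λ k).continuous).isBounded.exists_norm_le.imp
      fun c hc v => hc _ ⟨v, rfl⟩,
    fun k _ v i i' hii' => ?_,
    exists_forall_norm_mul_sum_sub_sum_mul_sum_le A hAkcont (fun k => (M k).continuous)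
      (fun k => (Λ k).continuous) (fun s v => by simpa using DFunLike.congr_fun (hconv s) v)
      (hexp N)⟩
  obtain ⟨B, hB⟩ := hΛ k v
  change Λ k v i i' = 0
  rw [← hB]
  exact blockDiagonal'_apply_ne _ _ _ hii'

/-- Corollary 3 of the paper: uniform block-diagonalisation. We identify
`ℂ^{m×m}`, `m = m₁ + ⋯ + m_d`, with matrices indexed by the sigma type `(j : Fin d) × Fin (mk j)`,
so that being block-diagonal with respect to the block sizes `m₁, …, m_d` means vanishing of all
entries whose row and column indices lie in different summands.  If `A(ρ,v)` has a uniform full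
asymptotic expansion with continuous, uniformly bounded coefficients `Ak`, the leading coefficient
is block-diagonal, `A₀(v) = bdiag (S₁ v, …, S_d v)` with continuous `S j`, and the spectra of
different blocks are uniformly separated by closed strips of width `δ`, then for every `N` the
block-diagonalisation scheme works uniformly in `v`: there are uniformly bounded families
`M₀ = I, M₁, …, M_{N-1}` and uniformly bounded block-diagonal families `Λ₀, …, Λ_{N-1}` with
`‖A(ρ,v)·∑ ρ^k M_k(v) - (∑ ρ^k M_k(v))·(∑ ρ^k Λ_k(v))‖ ≤ C' |ρ|^N` for all `v` and `|ρ| ≤ ε'`. -/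
theorem uniform_block_diagonalisation {Υ : Type*} [MetricSpace Υ] [CompactSpace Υ]
    {d : ℕ} (hd : 1 ≤ d) (mk : Fin d → ℕ)
    (A : ℝ → Υ → Matrix ((j : Fin d) × Fin (mk j)) ((j : Fin d) × Fin (mk j)) ℂ)
    (Ak : ℕ → Υ → Matrix ((j : Fin d) × Fin (mk j)) ((j : Fin d) × Fin (mk j)) ℂ)
    (hAkcont : ∀ k, Continuous (Ak k))
    (hAkbdd : ∀ k, ∃ c : ℝ, ∀ v, ‖Ak k v‖ ≤ c)
    (hexp : ∀ N : ℕ, ∃ C ε : ℝ, 0 < C ∧ 0 < ε ∧ ∀ v : Υ, ∀ ρ : ℝ, |ρ| ≤ ε →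
      ‖A ρ v - ∑ k ∈ Finset.range N, (ρ : ℂ) ^ k • Ak k v‖ ≤ C * |ρ| ^ N)
    (S : (j : Fin d) → Υ → Matrix (Fin (mk j)) (Fin (mk j)) ℂ)
    (hScont : ∀ j, Continuous (S j))
    (hA0 : ∀ v, Ak 0 v = Matrix.blockDiagonal' (fun j => S j v))
    (δ : ℝ) (hδ : 0 < δ)
    (hsep : ∀ i j : Fin d, i ≠ j →
      ∃ α : Υ → ℂ, ∃ β : Υ → ℝ, Continuous α ∧ Continuous β ∧ (∀ v, ‖α v‖ = 1) ∧
        (∀ v, ∀ lam ∈ spectrum ℂ (S i v), β v + δ / 2 < (α v * lam).re) ∧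
        (∀ v, ∀ mu ∈ spectrum ℂ (S j v), (α v * mu).re < β v - δ / 2)) :
    ∀ N : ℕ,
      ∃ M Λ : ℕ → Υ → Matrix ((j : Fin d) × Fin (mk j)) ((j : Fin d) × Fin (mk j)) ℂ,
        (∀ v, M 0 v = 1) ∧
        (∀ k < N, ∃ c : ℝ, ∀ v, ‖M k v‖ ≤ c) ∧
        (∀ k < N, ∃ c : ℝ, ∀ v, ‖Λ k v‖ ≤ c) ∧
        (∀ k < N, ∀ v, ∀ i i' : (j : Fin d) × Fin (mk j), i.1 ≠ i'.1 → Λ k v i i' = 0) ∧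
        ∃ C' ε' : ℝ, 0 < C' ∧ 0 < ε' ∧ ∀ v : Υ, ∀ ρ : ℝ, |ρ| ≤ ε' →
          ‖A ρ v * (∑ k ∈ Finset.range N, (ρ : ℂ) ^ k • M k v)
              - (∑ k ∈ Finset.range N, (ρ : ℂ) ^ k • M k v)
                * (∑ k ∈ Finset.range N, (ρ : ℂ) ^ k • Λ k v)‖ ≤ C' * |ρ| ^ N :=
  uniform_block_diagonalisation_general mk A Ak hAkcont hexp S hA0 δ hδ hsep
end

section
/- Let A⁺ ∈ ℂ^{m×m} and A⁻ ∈ ℂ^{n×n} be normal matrices (commuting with their conjugate transposes), and suppose there exist α ∈ ℂ with |α| = 1, β ∈ ℝ and δ > 0 such that every eigenvalue λ of A⁺ satisfies Re(αλ) ≥ β + δ/2 and every eigenvalue μ of A⁻ satisfies Re(αμ) ≤ β − δ/2. Then for every B ∈ ℂ^{m×n} the matrix X = α·∫₀^∞ exp(−sαA⁺) B exp(sαA⁻) ds is well defined, solves A⁺X − XA⁻ = B, and satisfies ‖X‖ ≤ δ^{−1}‖B‖, where ‖·‖ denotes the L² operator norm of matrices. -/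
/-!
The integrand `G s = exp (-s α A⁺) * B * exp (s α A⁻)` solves the linear ODE
`G' = -α (A⁺ G - G A⁻)` with `G 0 = B`. Because `A⁺` and `A⁻` are normal, the continuous
functional calculus bounds `‖exp (z A)‖` by the largest `|exp (z λ)|` over the spectrum, so the
spectral gap gives `‖G s‖ ≤ exp (-δ s) ‖B‖`. Hence `G` is integrable on `[0, ∞)` and tends to `0`, so
integrating the ODE gives `A⁺ X - X A⁻ = G 0 = B`, and `‖X‖ ≤ ‖B‖ ∫₀^∞ exp (-δ s) ds = ‖B‖ / δ`.
-/

open NormedSpace MeasureTheory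
open scoped Matrix.Norms.L2Operator
open Set Filter Topology

theorem IsStarNormal.norm_exp_smul_le {A : Type*} [CStarAlgebra A] {a : A} [IsStarNormal a]
    (t : ℂ) {r : ℝ} (h : ∀ z ∈ spectrum ℂ a, (t * z).re ≤ r) : ‖exp (t • a)‖ ≤ Real.exp r := by
  rw [← CFC.complex_exp_eq_normedSpace_exp, ← cfc_comp_const_mul t Complex.exp a]
  refine norm_cfc_le (Real.exp_pos r).le fun z hz => ?_
  simpa only [Complex.norm_exp, Real.exp_le_exp] using h z hz

theorem hasDerivAt_exp_ofReal_smul {𝔸 : Type*} [NormedRing 𝔸] [NormedAlgebra ℂ 𝔸]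
    [CompleteSpace 𝔸] (a : 𝔸) (t : ℝ) :
    HasDerivAt (fun u : ℝ => exp ((u : ℂ) • a)) (exp ((t : ℂ) • a) * a) t := by
  simpa [Function.comp_def] using
    (hasDerivAt_exp_smul_const a (t : ℂ)).scomp t Complex.ofRealCLM.hasDerivAt

section ExponentialDecay

theorem integrableOn_Ici_const_mul_exp_neg_mul (C : ℝ) {δ : ℝ} (hδ : 0 < δ) :
    IntegrableOn (fun s => C * Real.exp (-δ * s)) (Ici 0) := by
  rw [integrableOn_Ici_iff_integrableOn_Ioi]
  exact (exp_neg_integrableOn_Ioi 0 hδ).const_mul C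

variable {E : Type*} [NormedAddCommGroup E] {G : ℝ → E} {C δ : ℝ}

theorem integrableOn_Ici_of_norm_le_exp (hG : Continuous G) (hδ : 0 < δ)
    (h : ∀ s ∈ Ici 0, ‖G s‖ ≤ C * Real.exp (-δ * s)) : IntegrableOn G (Ici 0) :=
  (integrableOn_Ici_const_mul_exp_neg_mul C hδ).mono' hG.aestronglyMeasurable.restrict
    ((ae_restrict_iff' measurableSet_Ici).2 (ae_of_all _ h))

theorem tendsto_atTop_zero_of_norm_le_exp (hδ : 0 < δ)
    (h : ∀ s ∈ Ici 0, ‖G s‖ ≤ C * Real.exp (-δ * s)) : Tendsto G atTop (𝓝 0) := by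
  have hexp : Tendsto (fun s => C * Real.exp (-δ * s)) atTop (𝓝 0) := by
    simpa using (Real.tendsto_exp_atBot.comp
      (tendsto_id.const_mul_atTop_of_neg (neg_neg_iff_pos.2 hδ))).const_mul C
  exact squeeze_zero_norm' (eventually_atTop.2 ⟨0, h⟩) hexp

theorem norm_integral_Ici_le_of_norm_le_exp [NormedSpace ℝ E] (hδ : 0 < δ)
    (h : ∀ s ∈ Ici 0, ‖G s‖ ≤ C * Real.exp (-δ * s)) :
    ‖∫ s in Ici 0, G s‖ ≤ δ⁻¹ * C := by
  have hexp : ∫ s in Ioi 0, Real.exp (-δ * s) = δ⁻¹ := by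
    rw [integral_exp_mul_Ioi (neg_neg_iff_pos.2 hδ)]; simp
  calc ‖∫ s in Ici 0, G s‖ ≤ ∫ s in Ici 0, C * Real.exp (-δ * s) :=
        norm_integral_le_of_norm_le (integrableOn_Ici_const_mul_exp_neg_mul C hδ)
          ((ae_restrict_iff' measurableSet_Ici).2 (ae_of_all _ h))
    _ = δ⁻¹ * C := by
      rw [integral_Ici_eq_integral_Ioi, integral_const_mul, hexp, mul_comm]

theorem map_integral_Ici_eq_of_hasDerivAt [NormedSpace ℝ E] [CompleteSpace E] (Φ : E →L[ℝ] E)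
    (hG : ∀ s, HasDerivAt G (-Φ (G s)) s) (hint : IntegrableOn G (Ici 0)) (hlim : Tendsto G atTop (𝓝 0)) :
    Φ (∫ s in Ici 0, G s) = G 0 := by
  have hΦG : IntegrableOn (fun s => Φ (G s)) (Ioi 0) :=
    IntegrableOn.mono_set (Φ.integrable_comp hint) Ioi_subset_Ici_self
  have hFTC := integral_Ioi_of_hasDerivAt_of_tendsto' (fun s _ => hG s) hΦG.neg hlim
  rw [integral_neg, zero_sub, neg_inj] at hFTC
  rw [← Φ.integral_comp_comm hint, integral_Ici_eq_integral_Ioi, hFTC]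

end ExponentialDecay

section L2OpNorm

variable {m n : Type*} [Fintype m] [Fintype n] [DecidableEq m] [DecidableEq n]

namespace Matrix

variable {𝕜 : Type*} [RCLike 𝕜] {l : Type*} [Fintype l]

noncomputable def l2MulCLM : Matrix l m 𝕜 →L[𝕜] Matrix m n 𝕜 →L[𝕜] Matrix l n 𝕜 :=
  (mulLinearMap 𝕜).mkContinuous₂ 1 fun X Y => by
    rw [one_mul]; exact l2_opNorm_mul X Y

@[simp]
lemma l2MulCLM_apply (X : Matrix l m 𝕜) (Y : Matrix m n 𝕜) : l2MulCLM X Y = X * Y := by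
  simp [l2MulCLM]

noncomputable def sylvesterCLM (A : Matrix m m 𝕜) (D : Matrix n n 𝕜) :
    Matrix m n 𝕜 →L[𝕜] Matrix m n 𝕜 :=
  l2MulCLM A - (l2MulCLM (𝕜 := 𝕜) (l := m)).flip D

@[simp]
lemma sylvesterCLM_apply (A : Matrix m m 𝕜) (D : Matrix n n 𝕜) (X : Matrix m n 𝕜) :
    sylvesterCLM A D X = A * X - X * D := by
  simp [sylvesterCLM]

lemma l2_opNorm_mul_mul_le {o : Type*} [Fintype o] [DecidableEq o] (X : Matrix l m 𝕜)
    (B : Matrix m n 𝕜) (Y : Matrix n o 𝕜) : ‖X * B * Y‖ ≤ ‖X‖ * ‖B‖ * ‖Y‖ :=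
  (l2_opNorm_mul _ Y).trans (by gcongr; exact l2_opNorm_mul X B)

end Matrix

theorem HasDerivAt.matrix_mul {l : Type*} [Fintype l] {f : ℝ → Matrix l m ℂ}
    {g : ℝ → Matrix m n ℂ} {f' : Matrix l m ℂ} {g' : Matrix m n ℂ} {t : ℝ}
    (hf : HasDerivAt f f' t) (hg : HasDerivAt g g' t) :
    HasDerivAt (fun s => f s * g s) (f' * g t + f t * g') t := by
  have := (ContinuousLinearMap.bilinearRestrictScalars ℝ
    (Matrix.l2MulCLM (𝕜 := ℂ) (l := l) (m := m) (n := n))).hasDerivAt_of_bilinear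
      (fun _ => hf) (fun _ => hg)
  simpa [add_comm] using this

theorem hasDerivAt_exp_smul_mul_mul_exp_smul (P : Matrix m m ℂ) (B : Matrix m n ℂ)
    (Q : Matrix n n ℂ) (t : ℝ) :
    HasDerivAt (fun s : ℝ => exp ((s : ℂ) • P) * B * exp ((s : ℂ) • Q))
      (P * (exp ((t : ℂ) • P) * B * exp ((t : ℂ) • Q))
        + exp ((t : ℂ) • P) * B * exp ((t : ℂ) • Q) * Q) t := by
  have hcomm : Commute (exp ((t : ℂ) • P)) P := ((Commute.refl P).smul_left _).exp_left
  convert ((hasDerivAt_exp_ofReal_smul P t).matrix_mul (hasDerivAt_const t B)).matrix_mul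
    (hasDerivAt_exp_ofReal_smul Q t) using 1
  simp only [Matrix.mul_zero, add_zero, ← Matrix.mul_assoc, ← hcomm.eq]

theorem hasDerivAt_exp_neg_smul_mul_mul_exp_smul (A : Matrix m m ℂ) (D : Matrix n n ℂ)
    (B : Matrix m n ℂ) (α : ℂ) (t : ℝ) :
    HasDerivAt (fun s : ℝ => exp ((-((s : ℂ) * α)) • A) * B * exp (((s : ℂ) * α) • D))
      (-((α • Matrix.sylvesterCLM A D)
        (exp ((-((t : ℂ) * α)) • A) * B * exp (((t : ℂ) * α) • D)))) t := by
  have h := hasDerivAt_exp_smul_mul_mul_exp_smul ((-α) • A) B (α • D) t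
  simp only [smul_smul, mul_neg] at h
  convert h using 1
  simp only [neg_smul, smul_apply, Matrix.sylvesterCLM_apply, smul_sub,
    neg_sub, Matrix.neg_mul, Matrix.smul_mul, Matrix.mul_smul]
  abel

theorem norm_exp_neg_smul_mul_mul_exp_smul_le {A : Matrix m m ℂ} {D : Matrix n n ℂ}
    [IsStarNormal A] [IsStarNormal D] (B : Matrix m n ℂ) {α : ℂ} {β δ : ℝ}
    (hA : ∀ z ∈ spectrum ℂ A, β + δ / 2 ≤ (α * z).re)
    (hD : ∀ z ∈ spectrum ℂ D, (α * z).re ≤ β - δ / 2) {s : ℝ} (hs : 0 ≤ s) :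
    ‖exp ((-((s : ℂ) * α)) • A) * B * exp (((s : ℂ) * α) • D)‖ ≤ ‖B‖ * Real.exp (-δ * s) := by
  have hexpA : ‖exp ((-((s : ℂ) * α)) • A)‖ ≤ Real.exp (-(s * (β + δ / 2))) :=
    IsStarNormal.norm_exp_smul_le _ fun z hz => by
      rw [neg_mul, Complex.neg_re, mul_assoc, Complex.re_ofReal_mul]
      exact neg_le_neg (mul_le_mul_of_nonneg_left (hA z hz) hs)
  have hexpD : ‖exp (((s : ℂ) * α) • D)‖ ≤ Real.exp (s * (β - δ / 2)) :=
    IsStarNormal.norm_exp_smul_le _ fun z hz => by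
      rw [mul_assoc, Complex.re_ofReal_mul]
      exact mul_le_mul_of_nonneg_left (hD z hz) hs
  calc _ ≤ _ := Matrix.l2_opNorm_mul_mul_le _ _ _
    _ ≤ Real.exp (-(s * (β + δ / 2))) * ‖B‖ * Real.exp (s * (β - δ / 2)) := by gcongr
    _ = ‖B‖ * Real.exp (-δ * s) := by
      rw [mul_right_comm, mul_comm _ ‖B‖, ← Real.exp_add]
      ring_nf

end L2OpNorm

/-- Let `Ap`, `Am` be normal matrices whose spectra are separated by a closed
strip of width `δ` around the line `{ζ : Re (α ζ) = β}` (with `|α| = 1`).  Then for every `B` the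
matrix `X = α • ∫₀^∞ exp (-s α Ap) * B * exp (s α Am) ds` is well defined (the integrand is
Bochner integrable on `[0,∞)`), solves `Ap X - X Am = B`, and satisfies `‖X‖ ≤ δ⁻¹ ‖B‖` in the
`L²` operator norm. -/
theorem sylvester_normal_bound {m n : ℕ}
    (Ap : Matrix (Fin m) (Fin m) ℂ) (Am : Matrix (Fin n) (Fin n) ℂ)
    (hApnormal : IsStarNormal Ap) (hAmnormal : IsStarNormal Am)
    (α : ℂ) (hα : ‖α‖ = 1) (β δ : ℝ) (hδ : 0 < δ)
    (hAp : ∀ lam ∈ spectrum ℂ Ap, β + δ / 2 ≤ (α * lam).re)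
    (hAm : ∀ mu ∈ spectrum ℂ Am, (α * mu).re ≤ β - δ / 2)
    (B : Matrix (Fin m) (Fin n) ℂ) :
    IntegrableOn
      (fun s : ℝ => exp ((-((s : ℂ) * α)) • Ap) * B * exp (((s : ℂ) * α) • Am))
      (Set.Ici 0) ∧
    Ap * (α • ∫ s in Set.Ici (0:ℝ),
        exp ((-((s : ℂ) * α)) • Ap) * B * exp (((s : ℂ) * α) • Am))
      - (α • ∫ s in Set.Ici (0:ℝ),
        exp ((-((s : ℂ) * α)) • Ap) * B * exp (((s : ℂ) * α) • Am)) * Am = B ∧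
    ‖α • ∫ s in Set.Ici (0:ℝ),
        exp ((-((s : ℂ) * α)) • Ap) * B * exp (((s : ℂ) * α) • Am)‖ ≤ δ⁻¹ * ‖B‖ := by
  set G : ℝ → Matrix (Fin m) (Fin n) ℂ :=
    fun s => exp ((-((s : ℂ) * α)) • Ap) * B * exp (((s : ℂ) * α) • Am)
  have hbound : ∀ s ∈ Ici (0 : ℝ), ‖G s‖ ≤ ‖B‖ * Real.exp (-δ * s) := fun _ hs =>
    norm_exp_neg_smul_mul_mul_exp_smul_le B hAp hAm hs
  have hderiv (s : ℝ) :
      HasDerivAt G (-((α • Matrix.sylvesterCLM Ap Am).restrictScalars ℝ (G s))) s :=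
    hasDerivAt_exp_neg_smul_mul_mul_exp_smul Ap Am B α s
  have hint : IntegrableOn G (Ici 0) := integrableOn_Ici_of_norm_le_exp
    (continuous_iff_continuousAt.2 fun s => (hderiv s).continuousAt) hδ hbound
  refine ⟨hint, ?_, ?_⟩
  · have := map_integral_Ici_eq_of_hasDerivAt _ hderiv hint
      (tendsto_atTop_zero_of_norm_le_exp hδ hbound)
    simpa [Matrix.mul_smul, Matrix.smul_mul, smul_sub, G] using this
  · rw [norm_smul, hα, one_mul]
    exact norm_integral_Ici_le_of_norm_le_exp hδ hbound
end

section
/- Let H⁺ and H⁻ be complex Hilbert spaces, let A⁺ be a bounded self-adjoint operator on H⁺ with spectrum contained in [δ, ∞) and let A⁻ be a bounded self-adjoint operator on H⁻ with spectrum contained in (−∞, −δ], for some δ > 0. Then for every bounded operator B : H⁻ → H⁺ the function t ↦ exp(−tA⁺) ∘ B ∘ exp(tA⁻) is Bochner integrable on [0,∞), and the bounded operator X = ∫₀^∞ exp(−tA⁺) B exp(tA⁻) dt satisfies A⁺X − XA⁻ = B and ‖X‖ ≤ (2δ)^{−1}‖B‖. -/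
/-! The flow `f t = exp (-t P) B exp (t Q)` satisfies `f' = -(P f - f Q)` and `f 0 = B`, so if
`f` is integrable on `(0, ∞)` and decays, integrating `f'` gives `P X - X Q = B` for
`X = ∫₀^∞ f`. For self-adjoint operators the continuous functional calculus turns the spectral
conditions into `‖exp (-t A⁺)‖, ‖exp (t A⁻)‖ ≤ exp (-δ t)`, hence `‖f t‖ ≤ ‖B‖ exp (-2 δ t)`,
which gives integrability, decay and `‖X‖ ≤ ‖B‖ / (2 δ)`. -/

open NormedSpace MeasureTheory

open Set Filter Topology ContinuousLinearMap

section ExpDecay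

variable {E : Type*} [NormedAddCommGroup E] {f : ℝ → E} {C c : ℝ}

lemma integrableOn_Ioi_of_norm_le_exp (hf : AEStronglyMeasurable f (volume.restrict (Ioi 0)))
    (hc : 0 < c) (hdecay : ∀ t ∈ Ioi (0 : ℝ), ‖f t‖ ≤ C * Real.exp (-c * t)) :
    IntegrableOn f (Ioi 0) :=
  ((exp_neg_integrableOn_Ioi 0 hc).const_mul C).mono' hf
    ((ae_restrict_iff' measurableSet_Ioi).mpr (ae_of_all _ hdecay))

lemma tendsto_zero_of_norm_le_exp (hc : 0 < c)
    (hdecay : ∀ t ∈ Ioi (0 : ℝ), ‖f t‖ ≤ C * Real.exp (-c * t)) :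
    Tendsto f atTop (𝓝 0) := by
  have hexp : Tendsto (fun t : ℝ => C * Real.exp (-c * t)) atTop (𝓝 0) := by
    simpa using (Real.tendsto_exp_atBot.comp
      (tendsto_id.const_mul_atTop_of_neg (neg_lt_zero.mpr hc))).const_mul C
  exact squeeze_zero_norm' (eventually_gt_atTop 0 |>.mono hdecay) hexp

lemma norm_integral_Ioi_le_of_norm_le_exp [NormedSpace ℝ E] (hc : 0 < c)
    (hdecay : ∀ t ∈ Ioi (0 : ℝ), ‖f t‖ ≤ C * Real.exp (-c * t)) :
    ‖∫ t in Ioi 0, f t‖ ≤ C / c := by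
  calc ‖∫ t in Ioi 0, f t‖ ≤ ∫ t in Ioi 0, C * Real.exp (-c * t) :=
        norm_integral_le_of_norm_le ((exp_neg_integrableOn_Ioi 0 hc).const_mul C)
          ((ae_restrict_iff' measurableSet_Ioi).mpr (ae_of_all _ hdecay))
    _ = C / c := by
        rw [integral_const_mul, integral_exp_mul_Ioi (neg_lt_zero.mpr hc)]
        field_simp
        simp

end ExpDecay

lemma IsSelfAdjoint.norm_exp_smul_le {A : Type*} [CStarAlgebra A] {a : A} (ha : IsSelfAdjoint a)
    {c t : ℝ} (ht : 0 ≤ t) (hc : ∀ z ∈ spectrum ℂ a, z.re ≤ c) :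
    -- in this namespace a bare `exp` would mean `IsSelfAdjoint.exp`
    ‖NormedSpace.exp (t • a)‖ ≤ Real.exp (c * t) := by
  have hreal : ∀ x ∈ spectrum ℝ a, x ≤ c := fun x hx => by
    simpa using hc _ (spectrum.algebraMap_mem ℂ hx)
  rw [← CFC.real_exp_eq_normedSpace_exp ((IsSelfAdjoint.all t).smul ha),
    ← cfc_comp_smul t Real.exp a]
  refine norm_cfc_le (Real.exp_nonneg _) fun x hx => ?_
  rw [Real.norm_of_nonneg (Real.exp_nonneg _), smul_eq_mul, mul_comm]
  exact Real.exp_le_exp.mpr (mul_le_mul_of_nonneg_right (hreal x hx) ht)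

theorem HasDerivAt.clm_comp_real {E F G : Type*} [NormedAddCommGroup E] [NormedSpace ℂ E]
    [NormedAddCommGroup F] [NormedSpace ℂ F] [NormedAddCommGroup G] [NormedSpace ℂ G]
    {c : ℝ → F →L[ℂ] G} {c' : F →L[ℂ] G} {d : ℝ → E →L[ℂ] F} {d' : E →L[ℂ] F} {t : ℝ}
    (hc : HasDerivAt c c' t) (hd : HasDerivAt d d' t) :
    HasDerivAt (fun y => (c y).comp (d y)) (c'.comp (d t) + (c t).comp d') t := by
  rw [add_comm]
  exact ((compL ℂ E F G).bilinearRestrictScalars ℝ).hasDerivAt_of_bilinear (fun _ => hc)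
    (fun _ => hd)

section Sylvester

variable {E F : Type*} [NormedAddCommGroup E] [NormedSpace ℂ E]
  [NormedAddCommGroup F] [NormedSpace ℂ F]
  (P : E →L[ℂ] E) (Q : F →L[ℂ] F) (B : F →L[ℂ] E)

noncomputable def sylvesterMap : (F →L[ℂ] E) →L[ℂ] F →L[ℂ] E :=
  compL ℂ F E E P - (compL ℂ F F E).flip Q

lemma sylvesterMap_apply (X : F →L[ℂ] E) : sylvesterMap P Q X = P ∘L X - X ∘L Q := rfl

noncomputable def sylvesterFlow (t : ℝ) : F →L[ℂ] E :=
  exp ((-t) • P) ∘L B ∘L exp (t • Q)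

lemma sylvesterFlow_zero : sylvesterFlow P Q B 0 = B := by
  simp [sylvesterFlow, one_def]

lemma norm_sylvesterFlow_le (t : ℝ) :
    ‖sylvesterFlow P Q B t‖ ≤ ‖exp ((-t) • P)‖ * ‖B‖ * ‖exp (t • Q)‖ :=
  (opNorm_comp_le _ _).trans <| by
    rw [mul_assoc]
    exact mul_le_mul_of_nonneg_left (opNorm_comp_le _ _) (norm_nonneg _)

variable [CompleteSpace E] [CompleteSpace F]

lemma hasDerivAt_sylvesterFlow (t : ℝ) :
    HasDerivAt (sylvesterFlow P Q B) (-sylvesterMap P Q (sylvesterFlow P Q B t)) t := by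
  have hP : HasDerivAt (fun u : ℝ => exp ((-u) • P)) ((-1 : ℝ) • (P * exp ((-t) • P))) t :=
    (hasDerivAt_exp_smul_const' P (-t)).scomp t (hasDerivAt_neg t)
  have hQ : HasDerivAt (fun u : ℝ => B ∘L exp (u • Q)) (B ∘L (exp (t • Q) * Q)) t := by
    simpa using (hasDerivAt_const t B).clm_comp_real (hasDerivAt_exp_smul_const Q t)
  refine (hP.clm_comp_real hQ).congr_deriv ?_
  simp only [sylvesterMap_apply, sylvesterFlow, neg_one_smul, mul_def, neg_comp, comp_assoc]
  abel

lemma continuous_sylvesterFlow : Continuous (sylvesterFlow P Q B) :=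
  continuous_iff_continuousAt.mpr fun t => (hasDerivAt_sylvesterFlow P Q B t).continuousAt

theorem sylvesterMap_integral_sylvesterFlow
    (hint : IntegrableOn (sylvesterFlow P Q B) (Ioi 0))
    (htend : Tendsto (sylvesterFlow P Q B) atTop (𝓝 0)) :
    sylvesterMap P Q (∫ t in Ioi 0, sylvesterFlow P Q B t) = B := by
  have hFTC := integral_Ioi_of_hasDerivAt_of_tendsto
    (continuous_sylvesterFlow P Q B).continuousWithinAt
    (fun t _ => hasDerivAt_sylvesterFlow P Q B t) ((sylvesterMap P Q).integrable_comp hint).neg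
    htend
  rwa [integral_neg, (sylvesterMap P Q).integral_comp_comm hint, sylvesterFlow_zero, zero_sub,
    neg_inj] at hFTC

end Sylvester

/-- Let `Ap` be a bounded self-adjoint operator on the complex Hilbert space
`H⁺` with spectrum in `[δ, ∞)` and `Am` a bounded self-adjoint operator on `H⁻` with spectrum in
`(-∞, -δ]`, `δ > 0`. Then for every bounded `B : H⁻ → H⁺` the function
`t ↦ exp (-t Ap) ∘ B ∘ exp (t Am)` is Bochner integrable on `[0,∞)`, and
`X = ∫₀^∞ exp (-t Ap) B exp (t Am) dt` satisfies `Ap X - X Am = B` and `‖X‖ ≤ (2δ)⁻¹ ‖B‖`. -/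
theorem sylvester_hilbert_selfadjoint {Hp Hm : Type*}
    [NormedAddCommGroup Hp] [InnerProductSpace ℂ Hp] [CompleteSpace Hp]
    [NormedAddCommGroup Hm] [InnerProductSpace ℂ Hm] [CompleteSpace Hm]
    (Ap : Hp →L[ℂ] Hp) (Am : Hm →L[ℂ] Hm)
    (hAp : IsSelfAdjoint Ap) (hAm : IsSelfAdjoint Am) (δ : ℝ) (hδ : 0 < δ)
    (hspecp : spectrum ℂ Ap ⊆ {z : ℂ | δ ≤ z.re ∧ z.im = 0})
    (hspecm : spectrum ℂ Am ⊆ {z : ℂ | z.re ≤ -δ ∧ z.im = 0})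
    (B : Hm →L[ℂ] Hp) :
    IntegrableOn (fun t : ℝ => exp ((-t) • Ap) ∘L B ∘L exp (t • Am)) (Set.Ici 0) ∧
    Ap ∘L (∫ t in Set.Ici (0:ℝ), exp ((-t) • Ap) ∘L B ∘L exp (t • Am))
      - (∫ t in Set.Ici (0:ℝ), exp ((-t) • Ap) ∘L B ∘L exp (t • Am)) ∘L Am = B ∧
    ‖∫ t in Set.Ici (0:ℝ), exp ((-t) • Ap) ∘L B ∘L exp (t • Am)‖ ≤ (2 * δ)⁻¹ * ‖B‖ := by
  have hP (t : ℝ) (ht : 0 ≤ t) : ‖exp ((-t) • Ap)‖ ≤ Real.exp (-δ * t) := by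
    rw [neg_smul, ← smul_neg]
    refine hAp.neg.norm_exp_smul_le ht fun z hz => ?_
    rw [← spectrum.neg_eq, Set.mem_neg] at hz
    linarith [(hspecp hz).1, Complex.neg_re z]
  have hM (t : ℝ) (ht : 0 ≤ t) : ‖exp (t • Am)‖ ≤ Real.exp (-δ * t) :=
    hAm.norm_exp_smul_le ht fun z hz => (hspecm hz).1
  have hdecay : ∀ t ∈ Ioi (0 : ℝ),
      ‖sylvesterFlow Ap Am B t‖ ≤ ‖B‖ * Real.exp (-(2 * δ) * t) := fun t ht =>
    calc ‖sylvesterFlow Ap Am B t‖ ≤ Real.exp (-δ * t) * ‖B‖ * Real.exp (-δ * t) := by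
          grw [norm_sylvesterFlow_le, hP t ht.le, hM t ht.le]
      _ = ‖B‖ * Real.exp (-(2 * δ) * t) := by
          rw [mul_right_comm, ← Real.exp_add]
          ring_nf
  have hint := integrableOn_Ioi_of_norm_le_exp
    (continuous_sylvesterFlow Ap Am B).aestronglyMeasurable (by positivity) hdecay
  have htend := tendsto_zero_of_norm_le_exp (by positivity) hdecay
  rw [integral_Ici_eq_integral_Ioi, ← div_eq_inv_mul]
  exact ⟨(integrableOn_Ici_iff_integrableOn_Ioi).mpr hint,
    sylvesterMap_integral_sylvesterFlow Ap Am B hint htend,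
    norm_integral_Ioi_le_of_norm_le_exp (by positivity) hdecay⟩
end
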